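/- arXiv:2505.09275 — 8 statements merged into one kernel-verified Lean document; each statement's English description precedes it below -/
import Mathlib

section
/- For every positive integer n and indeterminates x_1,...,x_n, the sum over j from 1 to n of ((1+x_j)/x_j) * ∏_{p≠j} (1 - x_j x_p)/(x_j - x_p), plus (-1)^n ∏_{k=1}^n 1/x_k, equals 1. -/
/-!
The polynomial `N(t) = ∏ₚ (1 - xₚ t)` has degree `n`, so its divided difference of order
`n + 1` on the `n + 2` nodes `0, 1, x₁, …, xₙ` vanishes (Lagrange interpolation). The
contributions of the nodes `xⱼ`, `0` and `1` to that divided difference are minus the summands,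
minus `(-1)ⁿ ∏ₖ 1/xₖ`, and `1`. If some `xⱼ` equals `1` it is not a separate node: removing it
flips the sign of every other summand, while its own summand is `2`.
-/

open Finset Polynomial

section

variable {K : Type*} [Field K] [DecidableEq K]

theorem sum_add_neg_one_pow_mul_prod_inv_of_one_notMem {s : Finset K} (h0 : 0 ∉ s)
    (h1 : 1 ∉ s) :
    (∑ a ∈ s, (1 + a) / a * ∏ b ∈ s.erase a, (1 - a * b) / (a - b))
      + (-1) ^ #s * ∏ a ∈ s, a⁻¹ = 1 := by
  set f : K[X] := ∏ a ∈ s, (1 - C a * X)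
  have eval_f (t : K) : f.eval t = ∏ a ∈ s, (1 - a * t) := by simp [f, eval_prod]
  have hf : f.natDegree ≤ #s :=
    (natDegree_prod_le _ _).trans <| (sum_le_sum fun a _ => by compute_degree).trans (by simp)
  have h01 : (0 : K) ∉ insert 1 s := by simp [h0]
  have hcard : #(insert 0 (insert 1 s)) = #s + 2 := by
    rw [card_insert_of_notMem h01, card_insert_of_notMem h1]
  have hT := Lagrange.coeff_eq_sum (Set.injOn_id _) (P := f)
    (degree_le_of_natDegree_le hf |>.trans_lt (by rw [hcard]; exact_mod_cast (by omega)))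
  rw [hcard, coeff_eq_zero_of_natDegree_lt (by omega), sum_insert h01, sum_insert h1] at hT
  have at_zero : f.eval 0 / ∏ u ∈ (insert 0 (insert 1 s)).erase 0, (0 - u)
      = -((-1) ^ #s * ∏ a ∈ s, a⁻¹) := by
    rw [erase_insert h01, prod_insert h1, eval_f]
    simp only [zero_sub, mul_zero, sub_zero, prod_const_one, neg_one_mul, div_neg, one_div]
    rw [prod_neg (fun x : K => x), mul_inv, ← inv_pow, inv_neg_one, prod_inv_distrib]
  have at_one : f.eval 1 / ∏ u ∈ (insert 0 (insert 1 s)).erase 1, (1 - u) = 1 := by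
    rw [erase_insert_of_ne zero_ne_one, erase_insert h1, prod_insert h0, eval_f]
    simp only [mul_one, sub_zero, one_mul]
    exact div_self <| prod_ne_zero_iff.mpr fun a ha =>
      sub_ne_zero.mpr (ne_of_mem_of_not_mem ha h1).symm
  have at_node : ∀ a ∈ s, f.eval a / ∏ u ∈ (insert 0 (insert 1 s)).erase a, (a - u)
      = -((1 + a) / a * ∏ b ∈ s.erase a, (1 - a * b) / (a - b)) := by
    intro a ha
    have ha0 : a ≠ 0 := ne_of_mem_of_not_mem ha h0
    have ha1 : a - 1 ≠ 0 := sub_ne_zero.mpr (ne_of_mem_of_not_mem ha h1)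
    have hprod : ∏ b ∈ s.erase a, (a - b) ≠ 0 :=
      prod_ne_zero_iff.mpr fun b hb => sub_ne_zero.mpr (ne_of_mem_erase hb).symm
    rw [erase_insert_of_ne (Ne.symm ha0), erase_insert_of_ne (ne_of_mem_of_not_mem ha h1).symm,
      prod_insert (by simp [h0]), prod_insert (by simp [h1]), eval_f, ← mul_prod_erase s _ ha,
      prod_div_distrib]
    field_simp
    ring
  simp only [id, at_zero, at_one, sum_congr rfl at_node, sum_neg_distrib] at hT
  linear_combination hT

theorem sum_add_neg_one_pow_mul_prod_inv {s : Finset K} (h0 : 0 ∉ s) :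
    (∑ a ∈ s, (1 + a) / a * ∏ b ∈ s.erase a, (1 - a * b) / (a - b))
      + (-1) ^ #s * ∏ a ∈ s, a⁻¹ = 1 := by
  by_cases h1 : 1 ∈ s
  swap
  · exact sum_add_neg_one_pow_mul_prod_inv_of_one_notMem h0 h1
  obtain ⟨t, h1t, rfl⟩ : ∃ t, 1 ∉ t ∧ s = insert 1 t :=
    ⟨s.erase 1, notMem_erase 1 s, (insert_erase h1).symm⟩
  have ht :=
    sum_add_neg_one_pow_mul_prod_inv_of_one_notMem (fun h => h0 (mem_insert_of_mem h)) h1t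
  have at_one : (1 + 1) / 1 * ∏ b ∈ t, (1 - 1 * b) / (1 - b) = (2 : K) := by
    rw [prod_eq_one fun b hb => by
      rw [one_mul, div_self (sub_ne_zero.mpr (ne_of_mem_of_not_mem hb h1t).symm)]]
    norm_num
  have at_node : ∀ a ∈ t, (1 + a) / a * ∏ b ∈ (insert 1 t).erase a, (1 - a * b) / (a - b)
      = -((1 + a) / a * ∏ b ∈ t.erase a, (1 - a * b) / (a - b)) := by
    intro a ha
    have ha1 : a - 1 ≠ 0 := sub_ne_zero.mpr (ne_of_mem_of_not_mem ha h1t)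
    rw [erase_insert_of_ne (ne_of_mem_of_not_mem ha h1t).symm, prod_insert (by simp [h1t]),
      mul_one, ← neg_sub a 1, neg_div, div_self ha1]
    ring
  rw [sum_insert h1t, erase_insert h1t, at_one, sum_congr rfl at_node, sum_neg_distrib,
    card_insert_of_notMem h1t, prod_insert h1t, inv_one, pow_succ]
  linear_combination -ht

end

theorem stmt0_general {K : Type*} [Field K] (n : ℕ) (x : Fin n → K)
    (hx : ∀ i, x i ≠ 0) (hinj : Function.Injective x) :
    (∑ j : Fin n, ((1 + x j) / x j) *
        ∏ p ∈ Finset.univ.erase j, (1 - x j * x p) / (x j - x p))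
      + (-1 : K) ^ n * ∏ k : Fin n, (x k)⁻¹ = 1 := by
  classical
  have h := sum_add_neg_one_pow_mul_prod_inv (s := univ.image x) (by simpa [eq_comm] using hx)
  simp_rw [sum_image hinj.injOn, ← image_erase hinj, prod_image hinj.injOn,
    card_image_of_injective _ hinj, card_univ, Fintype.card_fin] at h
  exact h

/-- Lemma 4.1(i): for nonzero, pairwise distinct elements `x 1, …, x n` of a field,
`∑_j ((1+x_j)/x_j) ∏_{p≠j} (1 - x_j x_p)/(x_j - x_p) + (-1)^n ∏_k 1/x_k = 1`. -/
theorem stmt0 {K : Type*} [Field K] (n : ℕ) (hn : 0 < n) (x : Fin n → K)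
    (hx : ∀ i, x i ≠ 0) (hinj : Function.Injective x) :
    (∑ j : Fin n, ((1 + x j) / x j) *
        ∏ p ∈ Finset.univ.erase j, (1 - x j * x p) / (x j - x p))
      + (-1 : K) ^ n * ∏ k : Fin n, (x k)⁻¹ = 1 :=
  stmt0_general n x hx hinj
end

section
/- For every positive integer n, the polynomial identity ∑_{j=1}^{n} (-1)^j (1+x_j) ∏_{p≠j} x_p (1 - x_j x_p) ∏_{p<q, p,q≠j} (x_q - x_p) = (-1 + (-1)^n ∏_{p=1}^{n} x_p) ∏_{1≤p<q≤n} (x_q - x_p) holds in the polynomial ring ℚ[x_1,...,x_n]. -/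
/-!
Write `V = ∏_{p<q} (x_q - x_p)` and `D_j = ∏_{p≠j} (x_j - x_p)`. Removing the node `j` from
the Vandermonde product gives `(-1)^(j+1) D_j V_j = (-1)^n V`, so after division by `(-1)^n V`
the identity reads `∑_j (1 + x_j) ∏_{p≠j} x_p (1 - x_j x_p) / D_j = (-1)^(n+1) + ∏_p x_p`.
This is a partial-fraction identity: for `g(t) = ∏_p (1 - x_p t)` the `j`-th summand is
`-(∏_p x_p) g(x_j) / (x_j (x_j - 1) D_j)`, and the divided-difference sum of `g`, of degree `n`,
over the `n + 2` nodes `0, 1, x_1, …, x_n` vanishes. The computation takes place in the fraction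
field of `ℚ[x_1, …, x_n]`, where the `x_j` are distinct and different from `0` and `1`.
-/

open Finset

section Interpolation

open Polynomial

theorem Lagrange.sum_eval_div_prod_sub_eq_zero {F ι : Type*} [Field F] [DecidableEq ι]
    {s : Finset ι} {v : ι → F} (hvs : Set.InjOn v s) {f : F[X]} (hf : f.degree < ↑(#s - 1)) :
    ∑ i ∈ s, f.eval (v i) / ∏ j ∈ s.erase i, (v i - v j) = 0 := by
  rw [← Lagrange.coeff_eq_sum hvs (hf.trans_le (by exact_mod_cast Nat.sub_le _ _)),
    coeff_eq_zero_of_degree_lt hf]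

theorem Fintype.prod_erase_none {α M : Type*} [Fintype α] [DecidableEq α] [CommMonoid M]
    (f : Option α → M) : ∏ i ∈ univ.erase none, f i = ∏ i, f (some i) := by
  rw [show univ.erase none = univ.map Function.Embedding.some by ext (_ | _) <;> simp, prod_map]
  rfl

theorem Fintype.prod_erase_some {α M : Type*} [Fintype α] [DecidableEq α] [CommMonoid M]
    (f : Option α → M) (a : α) :
    ∏ i ∈ univ.erase (some a), f i = f none * ∏ i ∈ univ.erase a, f (some i) := by
  rw [show univ.erase (some a) = insert none ((univ.erase a).map Function.Embedding.some) by
    ext (_ | _) <;> simp, prod_insert (by simp), prod_map]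
  rfl

theorem natDegree_prod_one_sub_C_mul_X_le {K ι : Type*} [Field K] [Fintype ι] (a : ι → K) :
    (∏ p, (1 - C (a p) * X)).natDegree ≤ Fintype.card ι :=
  (natDegree_prod_le _ _).trans <| (sum_le_card_nsmul _ _ 1 fun _ _ => by compute_degree).trans_eq
    (by simp)

theorem one_add_mul_prod_div_prod_sub_eq {K ι : Type*} [Field K] [Fintype ι] [DecidableEq ι]
    {a : ι → K} (ha : Function.Injective a) {j : ι} (ha0 : a j ≠ 0) (ha1 : a j ≠ 1) :
    (1 + a j) * (∏ p ∈ univ.erase j, (a p * (1 - a j * a p))) /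
        ∏ p ∈ univ.erase j, (a j - a p) =
      -(∏ p, a p) * ((∏ p, (1 - a p * a j)) /
        (a j * ((a j - 1) * ∏ p ∈ univ.erase j, (a j - a p)))) := by
  have hD : ∏ p ∈ univ.erase j, (a j - a p) ≠ 0 :=
    prod_ne_zero_iff.mpr fun p hp => sub_ne_zero.mpr (ha.ne (ne_of_mem_erase hp).symm)
  have hj1 : a j - 1 ≠ 0 := sub_ne_zero.mpr ha1
  rw [← mul_prod_erase univ a (mem_univ j), ← mul_prod_erase univ (1 - a · * a j) (mem_univ j),
    prod_mul_distrib]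
  simp_rw [mul_comm _ (a j)]
  field_simp
  ring

theorem sum_one_add_mul_prod_div_prod_sub_eq {K ι : Type*} [Field K] [Fintype ι] [DecidableEq ι]
    {a : ι → K} (ha : Function.Injective a) (ha0 : ∀ i, a i ≠ 0) (ha1 : ∀ i, a i ≠ 1) :
    ∑ j, (1 + a j) * (∏ p ∈ univ.erase j, (a p * (1 - a j * a p))) /
        ∏ p ∈ univ.erase j, (a j - a p) = (-1) ^ (Fintype.card ι + 1) + ∏ p, a p := by
  let v : Option (Option ι) → K := fun i => i.elim 0 fun o => o.elim 1 a
  have hv : Function.Injective v := by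
    rintro (_ | _ | i) (_ | _ | j) h <;> simp_all [v, eq_comm, ha.eq_iff]
  have hg : (∏ p, (1 - C (a p) * X)).degree < ↑(#(univ : Finset (Option (Option ι))) - 1) :=
    (degree_le_of_natDegree_le (natDegree_prod_one_sub_C_mul_X_le a)).trans_lt
      (by simp [card_univ]; exact_mod_cast Nat.lt_succ_self _)
  have hdivdiff := Lagrange.sum_eval_div_prod_sub_eq_zero hv.injOn hg
  simp only [Fintype.sum_option, Fintype.prod_erase_none, Fintype.prod_erase_some,
    Fintype.prod_option, v, Option.elim] at hdivdiff
  simp only [eval_prod, eval_sub, eval_one, eval_mul, eval_C, eval_X, mul_zero, mul_one, sub_zero,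
    zero_sub, one_mul, prod_neg, prod_const_one] at hdivdiff
  have hQ : ∏ p, (1 - a p) ≠ 0 := prod_ne_zero_iff.mpr fun p _ => sub_ne_zero.mpr (ha1 p).symm
  have hsign : (∏ p, a p) * (1 / (-1 * ((-1) ^ #(univ : Finset ι) * ∏ p, a p))) =
      (-1) ^ (Fintype.card ι + 1) := by
    have hP : ∏ p, a p ≠ 0 := prod_ne_zero_iff.mpr fun p _ => ha0 p
    rw [card_univ]
    field_simp
    rw [← pow_add, Odd.neg_one_pow ⟨Fintype.card ι, by ring⟩]
  rw [div_self hQ] at hdivdiff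
  rw [sum_congr rfl fun j _ => one_add_mul_prod_div_prod_sub_eq ha (ha0 j) (ha1 j), ← mul_sum]
  linear_combination (-∏ p, a p) * hdivdiff + hsign

end Interpolation

theorem prod_filter_lt_eq_prod_filter_erase_mul {ι M : Type*} [Fintype ι] [LinearOrder ι]
    [CommMonoid M] (f : ι → M) (p j : ι) :
    ∏ q ∈ univ.filter (p < ·), f q =
      (∏ q ∈ (univ.erase j).filter (p < ·), f q) * if p < j then f j else 1 := by
  rw [filter_erase]
  split_ifs with h
  · exact (prod_erase_mul _ _ (by simpa using h)).symm
  · rw [erase_eq_of_notMem (by simpa using h), mul_one]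

theorem prod_prod_filter_lt_sub_eq {R : Type*} [CommRing R] {n : ℕ} (b : Fin n → R)
    (j : Fin n) :
    ∏ p, ∏ q ∈ univ.filter (p < ·), (b q - b p) =
      (∏ p ∈ Iio j, (b j - b p)) * (∏ q ∈ Ioi j, (b q - b j)) *
        ∏ p ∈ univ.erase j, ∏ q ∈ (univ.erase j).filter (p < ·), (b q - b p) := by
  have hIio : (univ.erase j).filter (· < j) = Iio j := by ext p; simpa using ne_of_lt
  rw [← mul_prod_erase univ _ (mem_univ j), filter_lt_eq_Ioi,
    prod_congr rfl fun p _ => prod_filter_lt_eq_prod_filter_erase_mul _ p j, prod_mul_distrib,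
    ← prod_filter, hIio]
  ring

theorem prod_erase_sub_eq_neg_one_pow_mul {R : Type*} [CommRing R] {n : ℕ} (b : Fin n → R)
    (j : Fin n) :
    ∏ p ∈ univ.erase j, (b j - b p) =
      (-1) ^ (n - 1 - j) * (∏ p ∈ Iio j, (b j - b p)) * ∏ q ∈ Ioi j, (b q - b j) := by
  have hsplit : univ.erase j = Iio j ∪ Ioi j := by ext p; simp [lt_or_lt_iff_ne, ne_comm]
  have hIoi : ∏ q ∈ Ioi j, (b j - b q) = (-1) ^ (n - 1 - j) * ∏ q ∈ Ioi j, (b q - b j) := by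
    rw [← Fin.card_Ioi, ← prod_const, ← prod_mul_distrib]
    exact prod_congr rfl fun _ _ => by ring
  rw [hsplit, prod_union (disjoint_Ioi_Iio j).symm, hIoi]
  ring

theorem neg_one_pow_mul_prod_erase_sub_mul_prod_prod_erase {R : Type*} [CommRing R] {n : ℕ}
    (b : Fin n → R) (j : Fin n) :
    (-1) ^ ((j : ℕ) + 1) * (∏ p ∈ univ.erase j, (b j - b p)) *
        ∏ p ∈ univ.erase j, ∏ q ∈ (univ.erase j).filter (p < ·), (b q - b p) =
      (-1) ^ n * ∏ p, ∏ q ∈ univ.filter (p < ·), (b q - b p) := by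
  have hsign : (-1 : R) ^ ((j : ℕ) + 1) * (-1) ^ (n - 1 - j) = (-1) ^ n := by
    rw [← pow_add]
    congr 1
    omega
  rw [prod_prod_filter_lt_sub_eq b j, prod_erase_sub_eq_neg_one_pow_mul]
  linear_combination (∏ p ∈ Iio j, (b j - b p)) * (∏ q ∈ Ioi j, (b q - b j)) *
    (∏ p ∈ univ.erase j, ∏ q ∈ (univ.erase j).filter (p < ·), (b q - b p)) * hsign

theorem sum_neg_one_pow_mul_prod_eq {K : Type*} [Field K] {n : ℕ} {a : Fin n → K}
    (ha : Function.Injective a) (ha0 : ∀ i, a i ≠ 0) (ha1 : ∀ i, a i ≠ 1) :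
    ∑ j : Fin n, (-1 : K) ^ ((j : ℕ) + 1) * (1 + a j) *
        (∏ p ∈ univ.erase j, (a p * (1 - a j * a p))) *
        ∏ p ∈ univ.erase j, ∏ q ∈ (univ.erase j).filter (p < ·), (a q - a p) =
      (-1 + (-1) ^ n * ∏ p, a p) * ∏ p, ∏ q ∈ univ.filter (p < ·), (a q - a p) := by
  have hterm : ∀ j : Fin n, (-1 : K) ^ ((j : ℕ) + 1) * (1 + a j) *
      (∏ p ∈ univ.erase j, (a p * (1 - a j * a p))) *
      ∏ p ∈ univ.erase j, ∏ q ∈ (univ.erase j).filter (p < ·), (a q - a p) =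
      (-1) ^ n * (∏ p, ∏ q ∈ univ.filter (p < ·), (a q - a p)) *
        ((1 + a j) * (∏ p ∈ univ.erase j, (a p * (1 - a j * a p))) /
          ∏ p ∈ univ.erase j, (a j - a p)) := by
    intro j
    have hD : ∏ p ∈ univ.erase j, (a j - a p) ≠ 0 :=
      prod_ne_zero_iff.mpr fun p hp => sub_ne_zero.mpr (ha.ne (ne_of_mem_erase hp).symm)
    rw [← neg_one_pow_mul_prod_erase_sub_mul_prod_prod_erase]
    field_simp
  have hsign : (-1 : K) ^ n * (-1) ^ (n + 1) = -1 := by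
    rw [← pow_add, Odd.neg_one_pow ⟨n, by ring⟩]
  rw [sum_congr rfl fun j _ => hterm j, ← mul_sum,
    sum_one_add_mul_prod_div_prod_sub_eq ha ha0 ha1, Fintype.card_fin]
  linear_combination (∏ p, ∏ q ∈ univ.filter (p < ·), (a q - a p)) * hsign

open MvPolynomial

/-- The variables are indexed by `Fin n`, so the paper's index `j` is `j.val + 1`. -/
theorem stmt1_general (n : ℕ) :
    (∑ j : Fin n, (-1 : MvPolynomial (Fin n) ℚ) ^ ((j : ℕ) + 1) * (1 + X j) *
        (∏ p ∈ Finset.univ.erase j, (X p * (1 - X j * X p))) *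
        ∏ p ∈ Finset.univ.erase j,
          ∏ q ∈ (Finset.univ.erase j).filter (fun q => p < q), (X q - X p))
    = (-1 + (-1 : MvPolynomial (Fin n) ℚ) ^ n * ∏ p : Fin n, X p) *
        ∏ p : Fin n, ∏ q ∈ Finset.univ.filter (fun q => p < q), (X q - X p) := by
  let K := FractionRing (MvPolynomial (Fin n) ℚ)
  have hinj := IsFractionRing.injective (MvPolynomial (Fin n) ℚ) K
  let x : Fin n → K := fun i => algebraMap (MvPolynomial (Fin n) ℚ) K (X i)
  have hx0 (i : Fin n) : x i ≠ 0 := (map_ne_zero_iff _ hinj).mpr (X_ne_zero (R := ℚ) i)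
  have hx1 (i : Fin n) : x i ≠ 1 := fun h => by
    simpa using congrArg (eval 0) (hinj (h.trans (map_one _).symm))
  apply hinj
  simpa [x] using sum_neg_one_pow_mul_prod_eq (hinj.comp X_injective) hx0 hx1

/-- Equation (4.1): a polynomial identity in `ℚ[x_1,…,x_n]`.  The variables are
indexed by `Fin n` (zero-based), so the paper's index `j ∈ {1,…,n}` corresponds to
`j.val + 1`. -/
theorem stmt1 (n : ℕ) (hn : 0 < n) :
    (∑ j : Fin n, (-1 : MvPolynomial (Fin n) ℚ) ^ ((j : ℕ) + 1) * (1 + X j) *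
        (∏ p ∈ Finset.univ.erase j, (X p * (1 - X j * X p))) *
        ∏ p ∈ Finset.univ.erase j,
          ∏ q ∈ (Finset.univ.erase j).filter (fun q => p < q), (X q - X p))
    = (-1 + (-1 : MvPolynomial (Fin n) ℚ) ^ n * ∏ p : Fin n, X p) *
        ∏ p : Fin n, ∏ q ∈ Finset.univ.filter (fun q => p < q), (X q - X p) :=
  stmt1_general n
end

section
/- For any positive integer n, ∑_{0 ≤ k_1 < k_2 < ... < k_n} ∏_{i=1}^{n} x_i^{k_i} = ∏_{i=1}^{n} x_i^{i-1}/(1 - ∏_{j=i}^{n} x_j), where the sum is over all strictly increasing sequences of nonnegative integers and convergence is in the ring of formal power series ℚ[[x_1,...,x_n]]. -/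
/-!
Indices run from `0`, so the `i`-th factor is `x_i^i / (1 - x_i ⋯ x_{n-1})`. Expanding each
factor as a geometric series, the product is the sum over `c ∈ ℕⁿ` of the monomials whose
exponent of `x_j` is `j + c_0 + ⋯ + c_j`. This map `c ↦ d` is a bijection from `ℕⁿ` onto the
strictly increasing `d`, with inverse `d ↦ (d_0, d_1 - d_0 - 1, …, d_{n-1} - d_{n-2} - 1)`.
So every strictly increasing exponent appears exactly once, and no other exponent appears.
-/

open scoped Classical

open Finset MvPowerSeries

theorem Finsupp.nsmul_left_injective {σ : Type*} {e : σ →₀ ℕ} (he : e ≠ 0) :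
    Function.Injective fun c : ℕ => c • e := by
  obtain ⟨s, hs⟩ := Finsupp.ne_iff.mp he
  intro c c' h
  have : c = c' ∨ e s = 0 := by simpa using DFunLike.congr_fun h s
  exact this.resolve_right hs

section GeometricSeries

variable {σ k : Type*} [Field k]

open WithPiTopology in
-- The inverse is the geometric series, summed coefficientwise (`k` carries the discrete topology).
theorem coeff_inv_one_sub_monomial {e : σ →₀ ℕ} (he : e ≠ 0) (d : σ →₀ ℕ) :
    coeff d (1 - monomial e (1 : k))⁻¹ = if ∃ c : ℕ, d = c • e then 1 else 0 := by
  let _ : TopologicalSpace k := ⊥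
  have _ : DiscreteTopology k := ⟨rfl⟩
  have h0 : constantCoeff (monomial e (1 : k)) = 0 := by
    rw [← coeff_zero_eq_constantCoeff_apply, coeff_monomial, if_neg he.symm]
  have hsum := hasSum_iff_hasSum_coeff.1 (summable_pow_of_constantCoeff_eq_zero h0).hasSum d
  rw [(MvPowerSeries.inv_eq_iff_mul_eq_one (by simp [h0])).2
    (tsum_pow_mul_one_sub_of_constantCoeff_eq_zero h0)]
  refine hsum.unique ?_
  simp only [monomial_pow, one_pow, coeff_monomial]
  split_ifs with h
  · obtain ⟨c, rfl⟩ := h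
    convert hasSum_ite_eq c (1 : k) using 3 with c'
    exact ⟨fun h => (Finsupp.nsmul_left_injective he h).symm, fun h => h ▸ rfl⟩
  · convert hasSum_zero with c
    exact if_neg fun hc => h ⟨c, hc⟩

theorem coeff_monomial_mul_inv_one_sub_monomial (a : σ →₀ ℕ) {e : σ →₀ ℕ} (he : e ≠ 0)
    (d : σ →₀ ℕ) :
    coeff d (monomial a (1 : k) * (1 - monomial e 1)⁻¹) =
      if ∃ c : ℕ, d = a + c • e then 1 else 0 := by
  rw [coeff_monomial_mul, one_mul]
  by_cases had : a ≤ d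
  · rw [if_pos had, coeff_inv_one_sub_monomial he]
    simp only [tsub_eq_iff_eq_add_of_le had, add_comm _ a]
  · rw [if_neg had, if_neg]
    rintro ⟨c, rfl⟩
    exact had le_self_add

theorem coeff_prod_monomial_mul_inv_one_sub_monomial {ι : Type*} [Fintype ι]
    (a e : ι → σ →₀ ℕ) (he : ∀ i, e i ≠ 0)
    (hinj : Function.Injective fun c : ι → ℕ => ∑ i, (a i + c i • e i)) (d : σ →₀ ℕ) :
    coeff d (∏ i, monomial (a i) (1 : k) * (1 - monomial (e i) 1)⁻¹) =
      if ∃ c : ι → ℕ, ∑ i, (a i + c i • e i) = d then 1 else 0 := by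
  simp only [coeff_prod, coeff_monomial_mul_inv_one_sub_monomial _ (he _), Fintype.prod_boole]
  split_ifs with hd
  · obtain ⟨c, rfl⟩ := hd
    let l₀ : ι →₀ σ →₀ ℕ := Finsupp.equivFunOnFinite.symm fun i => a i + c i • e i
    have hl₀ : l₀ ∈ finsuppAntidiag univ (∑ i, (a i + c i • e i)) :=
      mem_finsuppAntidiag.2 ⟨rfl, subset_univ _⟩
    rw [sum_eq_single_of_mem l₀ hl₀, if_pos fun i => ⟨c i, rfl⟩]
    intro l hl hne
    refine if_neg fun hl' => hne ?_
    choose c' hc' using hl'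
    have : c' = c := hinj <| by simpa only [← hc'] using (mem_finsuppAntidiag.1 hl).1
    ext1 i
    rw [hc' i, this]
    rfl
  · refine sum_eq_zero fun l hl => if_neg fun hl' => hd ?_
    choose c hc using hl'
    exact ⟨c, by simpa only [← hc] using (mem_finsuppAntidiag.1 hl).1⟩

end GeometricSeries

def shiftedPartialSum {n : ℕ} (c : Fin n → ℕ) (j : Fin n) : ℕ := j + ∑ i ∈ Iic j, c i

section ShiftedPartialSum

variable {n : ℕ}

theorem shiftedPartialSum_zero (c : Fin (n + 1) → ℕ) : shiftedPartialSum c 0 = c 0 := by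
  rw [shiftedPartialSum, show Iic (0 : Fin (n + 1)) = {0} from Iic_bot, sum_singleton, Fin.val_zero,
    zero_add]

theorem shiftedPartialSum_succ (c : Fin (n + 1) → ℕ) (i : Fin n) :
    shiftedPartialSum c i.succ = shiftedPartialSum c i.castSucc + 1 + c i.succ := by
  have hIio : Iio i.succ = Iic i.castSucc := by ext k; simp [Fin.le_castSucc_iff]
  rw [shiftedPartialSum, ← Iio_insert, sum_insert notMem_Iio_self, hIio, shiftedPartialSum,
    Fin.val_succ, Fin.val_castSucc]
  ring

def gaps (d : Fin (n + 1) → ℕ) : Fin (n + 1) → ℕ :=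
  Fin.cases (d 0) fun i => d i.succ - d i.castSucc - 1

theorem gaps_shiftedPartialSum (c : Fin (n + 1) → ℕ) : gaps (shiftedPartialSum c) = c := by
  funext j
  cases j using Fin.cases with
  | zero => exact shiftedPartialSum_zero c
  | succ i => simp only [gaps, Fin.cases_succ, shiftedPartialSum_succ]; omega

theorem shiftedPartialSum_injective : Function.Injective (shiftedPartialSum (n := n + 1)) :=
  Function.LeftInverse.injective gaps_shiftedPartialSum

theorem strictMono_shiftedPartialSum (c : Fin (n + 1) → ℕ) : StrictMono (shiftedPartialSum c) :=
  Fin.strictMono_iff_lt_succ.2 fun i => by rw [shiftedPartialSum_succ]; omega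

theorem shiftedPartialSum_gaps {d : Fin (n + 1) → ℕ} (hd : StrictMono d) :
    shiftedPartialSum (gaps d) = d := by
  funext j
  induction j using Fin.induction with
  | zero => exact shiftedPartialSum_zero _
  | succ i ih =>
    have := hd i.castSucc_lt_succ
    rw [shiftedPartialSum_succ, ih]
    simp only [gaps, Fin.cases_succ]
    omega

theorem exists_shiftedPartialSum_eq_iff {d : Fin (n + 1) → ℕ} :
    (∃ c, shiftedPartialSum c = d) ↔ StrictMono d :=
  ⟨fun ⟨c, hc⟩ => hc ▸ strictMono_shiftedPartialSum c, fun hd => ⟨_, shiftedPartialSum_gaps hd⟩⟩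

end ShiftedPartialSum

theorem prod_X_eq_monomial {σ R : Type*} [CommSemiring R] (s : Finset σ) :
    ∏ j ∈ s, (X j : MvPowerSeries σ R) = monomial (∑ j ∈ s, Finsupp.single j 1) 1 := by
  simp [X, prod_monomial]

section TailExponent

variable {n : ℕ}

noncomputable def tailExponent (i : Fin n) : Fin n →₀ ℕ :=
  ∑ j ∈ univ.filter (fun j => i ≤ j), Finsupp.single j 1

theorem tailExponent_ne_zero (i : Fin n) : tailExponent i ≠ 0 := fun h => by
  simpa [tailExponent, Finsupp.single_apply] using DFunLike.congr_fun h i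

theorem prod_X_filter_le_eq_monomial {R : Type*} [CommSemiring R] (i : Fin n) :
    ∏ j ∈ univ.filter (fun j => i ≤ j), (X j : MvPowerSeries (Fin n) R) =
      monomial (tailExponent i) 1 :=
  prod_X_eq_monomial _

theorem coe_sum_single_add_nsmul_tailExponent (c : Fin n → ℕ) :
    ⇑(∑ i : Fin n, (Finsupp.single i (i : ℕ) + c i • tailExponent i)) = shiftedPartialSum c := by
  funext j
  simp [tailExponent, Finsupp.single_apply, shiftedPartialSum, sum_add_distrib, ← sum_filter,
    filter_ge_eq_Iic]

end TailExponent

/-- `∑_{0 ≤ k_1 < ⋯ < k_n} ∏ x_i^{k_i} = ∏_i x_i^{i-1}/(1 - ∏_{j=i}^n x_j)` in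
`ℚ[[x_1,…,x_n]]`.  The left-hand side is the formal power series whose coefficient
at the monomial `x^d` is `1` if the exponent vector `d` is strictly increasing and
`0` otherwise; the statement is the coefficientwise equality with the right-hand side. -/
theorem stmt3 (n : ℕ) (hn : 0 < n) :
    ∀ d : Fin n →₀ ℕ,
      MvPowerSeries.coeff d
        (∏ i : Fin n, (MvPowerSeries.X i) ^ (i : ℕ) *
          (1 - ∏ j ∈ Finset.univ.filter (fun j => i ≤ j),
                (MvPowerSeries.X j : MvPowerSeries (Fin n) ℚ))⁻¹)
      = if StrictMono (⇑d) then 1 else 0 := by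
  obtain ⟨m, rfl⟩ := Nat.exists_eq_add_one_of_ne_zero hn.ne'
  intro d
  have hinj : Function.Injective fun c : Fin (m + 1) → ℕ =>
      ∑ i : Fin (m + 1), (Finsupp.single i (i : ℕ) + c i • tailExponent i) := fun c c' h =>
    shiftedPartialSum_injective <| by
      simpa only [coe_sum_single_add_nsmul_tailExponent] using congrArg DFunLike.coe h
  simp_rw [X_pow_eq, prod_X_filter_le_eq_monomial]
  rw [coeff_prod_monomial_mul_inv_one_sub_monomial _ _ tailExponent_ne_zero hinj]
  simp_rw [← DFunLike.coe_fn_eq, coe_sum_single_add_nsmul_tailExponent,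
    exists_shiftedPartialSum_eq_iff]
end

section
/- For a strictly increasing integer sequence (k_1,...,k_n), the modified Robbins polynomial satisfies R*_{(k_1,...,k_n)}(x_1,...,x_n; 1,1,0) = s_{(k_n - n + 1, k_{n-1} - n + 2, ..., k_2 - 1, k_1)}(x_1,...,x_n) · ∏_{1≤i<j≤n} (1 + x_i x_j). -/
/-!
At `(u, v, w) = (1, 1, 0)` the factor `∏_{i<j} (1 + x_i x_j)` is symmetric, so it comes out of
the antisymmetrisation, leaving the alternant `det (x_i ^ k_j)`. Reversing its columns gives the
bialternant numerator of `s_λ` for `λ_j = k_{n-j} - (n-1-j)`, which is weakly decreasing because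
`k` is strictly increasing; the same reversal turns `∏_{i<j} (x_j - x_i)` into
`∏_{i<j} (x_i - x_j)`, and the two signs cancel.
-/

open scoped Classical

/-- The modified Robbins polynomial
`R*_k(x_1,…,x_n; u,v,w)
  = asym[∏_{i<j}(u x_i x_j + v + w x_i) ∏_i x_i^{k_i}] / ∏_{i<j}(x_j - x_i)`. -/
noncomputable def Rstar {K : Type*} [Field K] (n : ℕ) (k : Fin n → ℤ)
    (x : Fin n → K) (u v w : K) : K :=
  (∑ σ : Equiv.Perm (Fin n), ((Equiv.Perm.sign σ : ℤ) : K) *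
      ((∏ i : Fin n, ∏ j ∈ Finset.univ.filter (fun j => i < j),
          (u * x (σ i) * x (σ j) + v + w * x (σ i))) *
        ∏ i : Fin n, x (σ i) ^ (k i))) /
    ∏ i : Fin n, ∏ j ∈ Finset.univ.filter (fun j => i < j), (x j - x i)

/-- The Schur polynomial via the bialternant formula, with the convention that it
is `0` if `λ` is not weakly decreasing. -/
noncomputable def schur {K : Type*} [Field K] (n : ℕ) (lam : Fin n → ℤ)
    (x : Fin n → K) : K :=
  if Antitone lam then
    (Matrix.det (Matrix.of fun i j : Fin n => x i ^ (lam j + ((n - 1 - (j : ℕ) : ℕ) : ℤ)))) /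
      ∏ i : Fin n, ∏ j ∈ Finset.univ.filter (fun j => i < j), (x i - x j)
  else 0

open Finset

section PairProducts

variable {M : Type*} [CommMonoid M] {n : ℕ}

theorem prod_pairs_comp_perm (f : Fin n → Fin n → M) (hf : ∀ i j, f i j = f j i)
    (σ : Equiv.Perm (Fin n)) :
    ∏ i : Fin n, ∏ j ∈ univ.filter (fun j => i < j), f (σ i) (σ j)
      = ∏ i : Fin n, ∏ j ∈ univ.filter (fun j => i < j), f i j := by
  rw [prod_sigma', prod_sigma']
  refine prod_nbij'
    (fun p => if σ p.1 < σ p.2 then ⟨σ p.1, σ p.2⟩ else ⟨σ p.2, σ p.1⟩)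
    (fun p => if σ.symm p.1 < σ.symm p.2 then ⟨σ.symm p.1, σ.symm p.2⟩
      else ⟨σ.symm p.2, σ.symm p.1⟩)
    ?_ ?_ ?_ ?_ ?_ <;> rintro ⟨a, b⟩ hab <;>
    simp only [mem_sigma, mem_univ, mem_filter, true_and] at hab ⊢ <;>
    grind [σ.injective, σ.symm.injective, Equiv.symm_apply_apply, Equiv.apply_symm_apply]

theorem prod_pairs_rev (g : Fin n → Fin n → M) :
    ∏ i : Fin n, ∏ j ∈ univ.filter (fun j => i < j), g j.rev i.rev
      = ∏ i : Fin n, ∏ j ∈ univ.filter (fun j => i < j), g i j := by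
  rw [prod_sigma', prod_sigma']
  exact prod_nbij' (fun p => ⟨p.2.rev, p.1.rev⟩) (fun p => ⟨p.2.rev, p.1.rev⟩)
    (by simp) (by simp) (by simp) (by simp) (by simp)

end PairProducts

theorem det_vandermonde_eq_prod_pairs {R : Type*} [CommRing R] {n : ℕ} (x : Fin n → R) :
    (Matrix.vandermonde x).det
      = ∏ i : Fin n, ∏ j ∈ univ.filter (fun j => i < j), (x j - x i) := by
  simp only [Matrix.det_vandermonde, filter_lt_eq_Ioi]

theorem prod_pairs_sub_swap {R : Type*} [CommRing R] {n : ℕ} (x : Fin n → R) :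
    ∏ i : Fin n, ∏ j ∈ univ.filter (fun j => i < j), (x i - x j)
      = (Equiv.Perm.sign (Fin.revPerm : Equiv.Perm (Fin n)) : R) *
        ∏ i : Fin n, ∏ j ∈ univ.filter (fun j => i < j), (x j - x i) := by
  rw [← prod_pairs_rev, ← det_vandermonde_eq_prod_pairs, ← det_vandermonde_eq_prod_pairs,
    ← Matrix.det_permute]
  rfl

theorem StrictMono.monotone_sub_val {n : ℕ} {k : Fin n → ℤ} (hk : StrictMono k) :
    Monotone fun i : Fin n => k i - i := by
  cases n with
  | zero => exact fun i => i.elim0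
  | succ m =>
    refine Fin.monotone_iff_le_succ.2 fun i => ?_
    have := hk i.castSucc_lt_succ
    simp only [Fin.val_castSucc, Fin.val_succ]
    omega

theorem Rstar_one_one_zero {K : Type*} [Field K] (n : ℕ) (k : Fin n → ℤ) (x : Fin n → K) :
    Rstar n k x 1 1 0
      = (Matrix.of fun i j : Fin n => x i ^ k j).det *
          (∏ i : Fin n, ∏ j ∈ univ.filter (fun j => i < j), (1 + x i * x j)) /
        ∏ i : Fin n, ∏ j ∈ univ.filter (fun j => i < j), (x j - x i) := by
  rw [Rstar, Matrix.det_apply', sum_mul]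
  congr 1
  refine sum_congr rfl fun σ _ => ?_
  rw [← prod_pairs_comp_perm (fun a b => 1 + x a * x b) (fun a b => by ring) σ]
  simp only [one_mul, zero_mul, add_zero, add_comm (1 : K), Matrix.of_apply]
  ring

theorem schur_rev_sub_val {K : Type*} [Field K] {n : ℕ} {k : Fin n → ℤ} (hk : StrictMono k)
    (x : Fin n → K) :
    schur n (fun j => k j.rev - ((j.rev : ℕ) : ℤ)) x
      = (Matrix.of fun i j : Fin n => x i ^ k j).det /
        ∏ i : Fin n, ∏ j ∈ univ.filter (fun j => i < j), (x j - x i) := by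
  have hanti : Antitone fun j : Fin n => k j.rev - ((j.rev : ℕ) : ℤ) :=
    hk.monotone_sub_val.comp_antitone Fin.rev_anti
  have hcols : (Matrix.of fun i j : Fin n =>
        x i ^ (k j.rev - ((j.rev : ℕ) : ℤ) + ((n - 1 - (j : ℕ) : ℕ) : ℤ)))
      = (Matrix.of fun i j : Fin n => x i ^ k j).submatrix id Fin.revPerm := by
    ext i j
    simp only [Matrix.of_apply, Matrix.submatrix_apply, id_eq, Fin.revPerm_apply, Fin.val_rev]
    congr 1
    omega
  have hsign : (Equiv.Perm.sign (Fin.revPerm : Equiv.Perm (Fin n)) : K) ≠ 0 := by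
    rcases Int.units_eq_one_or (Equiv.Perm.sign (Fin.revPerm : Equiv.Perm (Fin n))) with h | h <;>
      simp [h]
  rw [schur, if_pos hanti, hcols, Matrix.det_permute', prod_pairs_sub_swap,
    mul_div_mul_left _ _ hsign]

theorem stmt6_general (n : ℕ) (k : Fin n → ℤ) (hk : StrictMono k) :
    Rstar n k
        (fun i => algebraMap (MvPolynomial (Fin n) ℚ)
          (FractionRing (MvPolynomial (Fin n) ℚ)) (MvPolynomial.X i)) 1 1 0
      = schur n (fun j => k j.rev - ((j.rev : ℕ) : ℤ))
          (fun i => algebraMap (MvPolynomial (Fin n) ℚ)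
            (FractionRing (MvPolynomial (Fin n) ℚ)) (MvPolynomial.X i)) *
        ∏ i : Fin n, ∏ j ∈ Finset.univ.filter (fun j => i < j),
          (1 + algebraMap (MvPolynomial (Fin n) ℚ)
              (FractionRing (MvPolynomial (Fin n) ℚ)) (MvPolynomial.X i) *
            algebraMap (MvPolynomial (Fin n) ℚ)
              (FractionRing (MvPolynomial (Fin n) ℚ)) (MvPolynomial.X j)) := by
  rw [Rstar_one_one_zero, schur_rev_sub_val hk, mul_div_right_comm]

/-- Proposition 2.2(ii): for a strictly increasing integer sequence `k`,
`R*_k(x; 1,1,0) = s_{(k_n - n + 1, …, k_2 - 1, k_1)}(x) ∏_{i<j}(1 + x_i x_j)`,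
as an identity in `ℚ(x_1,…,x_n)`. -/
theorem stmt6 (n : ℕ) (hn : 0 < n) (k : Fin n → ℤ) (hk : StrictMono k) :
    Rstar n k
        (fun i => algebraMap (MvPolynomial (Fin n) ℚ)
          (FractionRing (MvPolynomial (Fin n) ℚ)) (MvPolynomial.X i)) 1 1 0
      = schur n (fun j => k j.rev - ((j.rev : ℕ) : ℤ))
          (fun i => algebraMap (MvPolynomial (Fin n) ℚ)
            (FractionRing (MvPolynomial (Fin n) ℚ)) (MvPolynomial.X i)) *
        ∏ i : Fin n, ∏ j ∈ Finset.univ.filter (fun j => i < j),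
          (1 + algebraMap (MvPolynomial (Fin n) ℚ)
              (FractionRing (MvPolynomial (Fin n) ℚ)) (MvPolynomial.X i) *
            algebraMap (MvPolynomial (Fin n) ℚ)
              (FractionRing (MvPolynomial (Fin n) ℚ)) (MvPolynomial.X j)) :=
  stmt6_general n k hk
end

section
/- The sum over all weakly decreasing n-tuples of nonnegative integers of modified Robbins polynomials satisfies the reciprocity ∑_{k_1 ≥ ... ≥ k_n ≥ 0} R*_{(k_1,...,k_n)}(x_1,...,x_n; 1,1,w) = (-1)^n ∏_{i=1}^{n} x_i^{-1} · ∑_{0 ≤ k_1 < ... < k_n} R*_{(k_1,...,k_n)}(x_1^{-1},...,x_n^{-1}; 1,1,w). -/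
/-!
Reversing the order of the variables (`σ ↦ σ * rev`) and inverting them matches the two sides
term by term. Each factor `x_j⁻¹ x_i⁻¹ + 1 + w x_j⁻¹` equals `(x_i x_j + 1 + w x_i) / (x_i x_j)`,
the Vandermonde product in the `x⁻¹` picks up the same `∏_{i<j} (x_i x_j)⁻¹` together with
`sign rev`, and `(1 - P⁻¹)⁻¹ = -P / (1 - P)` turns the strict geometric series in the `x⁻¹`
into `(-1)^n ∏ x_i` times the weak one in the `x`.
-/

open Finset

section Intervals

variable {α M : Type*} [CommMonoid M] [Fintype α] [LinearOrder α]
  [LocallyFiniteOrderTop α] [LocallyFiniteOrderBot α]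

theorem Finset.prod_prod_Ioi_mul_self (y : α → M) :
    ∏ i, ∏ j ∈ Ioi i, (y i * y j) = (∏ i, y i) ^ (Fintype.card α - 1) := by
  classical
  rw [prod_prod_Ioi_mul_eq_prod_prod_off_diag (fun _ i => y i), ← prod_pow]
  refine prod_congr rfl fun i _ => ?_
  rw [prod_const, card_compl, card_singleton]

theorem Finset.prod_prod_Iic_eq_prod_pow_card_Ici (y : α → M) :
    ∏ i, ∏ j ∈ Iic i, y j = ∏ j, y j ^ #(Ici j) := by
  rw [prod_comm' (t' := univ) (s' := Ici) (by simp)]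
  exact prod_congr rfl fun j _ => prod_const _

theorem Finset.prod_prod_Ioi_mul_inv_mul_inv {G : Type*} [DivisionCommMonoid G]
    (g : α → α → G) (y : α → G) :
    ∏ i, ∏ j ∈ Ioi i, (g i j * ((y i)⁻¹ * (y j)⁻¹))
      = (∏ i, ∏ j ∈ Ioi i, g i j) * ((∏ i, y i) ^ (Fintype.card α - 1))⁻¹ := by
  rw [prod_congr rfl fun i _ => prod_mul_distrib, prod_mul_distrib,
    prod_prod_Ioi_mul_self (fun i => (y i)⁻¹), prod_inv_distrib, inv_pow]

end Intervals

theorem Fin.prod_prod_Ioi_rev {n : ℕ} {M : Type*} [CommMonoid M] (f : Fin n → Fin n → M) :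
    ∏ i : Fin n, ∏ j ∈ Ioi i, f i.rev j.rev = ∏ i : Fin n, ∏ j ∈ Ioi i, f j i := by
  rw [← Equiv.prod_comp Fin.revPerm]
  have h (i : Fin n) : ∏ j ∈ Ioi i.rev, f i.rev.rev j.rev = ∏ j ∈ Iio i, f i j := by
    rw [← map_revPerm_Iio, prod_map]
    simp
  simp only [Fin.revPerm_apply, h]
  exact prod_comm' (by simp)

theorem Int.cast_units_mul_self {R : Type*} [Ring R] (u : ℤˣ) : ((u : ℤ) : R) * u = 1 := by
  rw [← Int.cast_mul, ← Units.val_mul, Int.units_mul_self, Units.val_one, Int.cast_one]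

theorem Fin.prod_prod_Ioi_inv_sub_inv {n : ℕ} {F : Type*} [Field F] {z : Fin n → F}
    (hz : ∀ i, z i ≠ 0) :
    ∏ i, ∏ j ∈ Ioi i, ((z j)⁻¹ - (z i)⁻¹)
      = ((Equiv.Perm.sign (Fin.revPerm (n := n)) : ℤ) : F) * ((∏ i, z i) ^ (n - 1))⁻¹ *
        ∏ i, ∏ j ∈ Ioi i, (z j - z i) := by
  set s : F := ((Equiv.Perm.sign (Fin.revPerm (n := n)) : ℤ) : F)
  have key (i j : Fin n) : (z i)⁻¹ - (z j)⁻¹ = (z j - z i) * ((z i)⁻¹ * (z j)⁻¹) := by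
    field_simp [hz i, hz j]
  have hswap : ∏ i, ∏ j ∈ Ioi i, ((z i)⁻¹ - (z j)⁻¹)
      = (∏ i, ∏ j ∈ Ioi i, (z j - z i)) * ((∏ i, z i) ^ (n - 1))⁻¹ := by
    simp_rw [key]
    rw [prod_prod_Ioi_mul_inv_mul_inv, Fintype.card_fin]
  have hrev := Fin.revPerm.prod_Ioi_comp_eq_sign_mul_prod
    (f := fun i j => (z j)⁻¹ - (z i)⁻¹) fun _ _ => (neg_sub _ _).symm
  simp only [Fin.revPerm_apply] at hrev
  rw [prod_prod_Ioi_rev (fun a b => (z b)⁻¹ - (z a)⁻¹), hswap] at hrev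
  linear_combination (-s) * hrev - (∏ i, ∏ j ∈ Ioi i, ((z j)⁻¹ - (z i)⁻¹)) *
    Int.cast_units_mul_self (R := F) (Equiv.Perm.sign Fin.revPerm)

theorem inv_one_sub_inv {F : Type*} [Field F] {a : F} (ha : a ≠ 0) :
    (1 - a⁻¹)⁻¹ = -(a * (1 - a)⁻¹) := by
  rw [inv_eq_one_div a, one_sub_div ha, inv_div, ← neg_sub, div_neg, div_eq_mul_inv]

namespace Robbins

variable {F : Type*} [Field F] {n : ℕ}

/-- `robbinsProd w z = ∏_{i<j} (u z_i z_j + v + w z_i)` at `u = v = 1`, while `weakGeomSeries z`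
and `strictGeomSeries z` are the closed forms of `∑_{k_1 ≥ … ≥ k_n ≥ 0} ∏ z_i^{k_i}` and
`∑_{0 ≤ k_1 < … < k_n} ∏ z_i^{k_i}`. -/
def robbinsProd (w : F) (z : Fin n → F) : F :=
  ∏ i, ∏ j ∈ Ioi i, (z i * z j + 1 + w * z i)

def weakGeomSeries (z : Fin n → F) : F :=
  ∏ i, (1 - ∏ j ∈ Iic i, z j)⁻¹

def strictGeomSeries (z : Fin n → F) : F :=
  ∏ i, (z i ^ (i : ℕ) * (1 - ∏ j ∈ Ici i, z j)⁻¹)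

variable {z : Fin n → F}

theorem robbinsProd_inv_comp_rev (w : F) (hz : ∀ i, z i ≠ 0) :
    robbinsProd w (z⁻¹ ∘ Fin.rev) = robbinsProd w z * ((∏ i, z i) ^ (n - 1))⁻¹ := by
  have key (i j : Fin n) : (z j)⁻¹ * (z i)⁻¹ + 1 + w * (z j)⁻¹
      = (z i * z j + 1 + w * z i) * ((z i)⁻¹ * (z j)⁻¹) := by
    field_simp [hz i, hz j]
    ring
  simp only [robbinsProd, Function.comp_apply, Pi.inv_apply]
  rw [Fin.prod_prod_Ioi_rev (fun a b => (z a)⁻¹ * (z b)⁻¹ + 1 + w * (z a)⁻¹)]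
  simp_rw [key]
  rw [prod_prod_Ioi_mul_inv_mul_inv, Fintype.card_fin]

theorem strictGeomSeries_inv_comp_rev (hz : ∀ i, z i ≠ 0) :
    strictGeomSeries (z⁻¹ ∘ Fin.rev) = (-1) ^ n * (∏ i, z i) * weakGeomSeries z := by
  have hpartial (i : Fin n) : ∏ j ∈ Ici i.rev, (z j.rev)⁻¹ = (∏ j ∈ Iic i, z j)⁻¹ := by
    rw [← Fin.map_revPerm_Iic, prod_map, ← prod_inv_distrib]
    simp
  have hterm (i : Fin n) : (z i)⁻¹ ^ (i.rev : ℕ) * (1 - ∏ j ∈ Ici i.rev, (z j.rev)⁻¹)⁻¹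
      = -1 * ((z i)⁻¹ ^ (i.rev : ℕ) * ∏ j ∈ Iic i, z j) * (1 - ∏ j ∈ Iic i, z j)⁻¹ := by
    rw [hpartial, inv_one_sub_inv (prod_ne_zero_iff.2 fun j _ => hz j)]
    ring
  have hcancel (i : Fin n) : (z i)⁻¹ ^ (i.rev : ℕ) * z i ^ #(Ici i) = z i := by
    rw [Fin.card_Ici, show n - (i : ℕ) = i.rev + 1 by rw [Fin.val_rev]; omega, pow_succ,
      ← mul_assoc, inv_pow, inv_mul_cancel₀ (pow_ne_zero _ (hz i)), one_mul]
  rw [strictGeomSeries, ← Equiv.prod_comp Fin.revPerm]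
  simp only [Fin.revPerm_apply, Function.comp_apply, Pi.inv_apply, Fin.rev_rev, hterm]
  rw [prod_mul_distrib, prod_mul_distrib, prod_mul_distrib, prod_const, card_univ,
    Fintype.card_fin, prod_prod_Iic_eq_prod_pow_card_Ici, ← prod_mul_distrib]
  simp only [hcancel, weakGeomSeries]

theorem reciprocity (x : Fin n → F) (w : F) (hx : ∀ i, x i ≠ 0) :
    (∑ σ : Equiv.Perm (Fin n), ((Equiv.Perm.sign σ : ℤ) : F) *
        (robbinsProd w (x ∘ σ) * weakGeomSeries (x ∘ σ))) / ∏ i, ∏ j ∈ Ioi i, (x j - x i)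
      = (-1) ^ n * (∏ i, (x i)⁻¹) *
        ((∑ σ : Equiv.Perm (Fin n), ((Equiv.Perm.sign σ : ℤ) : F) *
          (robbinsProd w (x⁻¹ ∘ σ) * strictGeomSeries (x⁻¹ ∘ σ))) /
            ∏ i, ∏ j ∈ Ioi i, ((x j)⁻¹ - (x i)⁻¹)) := by
  set s : F := ((Equiv.Perm.sign (Fin.revPerm (n := n)) : ℤ) : F)
  set c : F := (∏ i, x i) ^ (n - 1)
  have hx₀ : ∏ i, x i ≠ 0 := prod_ne_zero_iff.2 fun i _ => hx i
  have hsc : s * c⁻¹ ≠ 0 :=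
    mul_ne_zero (left_ne_zero_of_mul_eq_one (Int.cast_units_mul_self _))
      (inv_ne_zero (pow_ne_zero _ hx₀))
  have hterm (σ : Equiv.Perm (Fin n)) :
      ((Equiv.Perm.sign (σ * Fin.revPerm) : ℤ) : F) *
        (robbinsProd w (x⁻¹ ∘ (σ * Fin.revPerm : Equiv.Perm (Fin n))) *
          strictGeomSeries (x⁻¹ ∘ (σ * Fin.revPerm : Equiv.Perm (Fin n))))
      = s * c⁻¹ * ((-1) ^ n * ∏ i, x i) *
        (((Equiv.Perm.sign σ : ℤ) : F) * (robbinsProd w (x ∘ σ) * weakGeomSeries (x ∘ σ))) := by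
    have hcomp : x⁻¹ ∘ (σ * Fin.revPerm : Equiv.Perm (Fin n)) = (x ∘ σ)⁻¹ ∘ Fin.rev := rfl
    have hσ : ∏ i, (x ∘ σ) i = ∏ i, x i := Equiv.prod_comp σ x
    have hxσ : ∀ i, (x ∘ σ) i ≠ 0 := fun i => hx (σ i)
    rw [hcomp, robbinsProd_inv_comp_rev w hxσ, strictGeomSeries_inv_comp_rev hxσ, hσ,
      Equiv.Perm.sign_mul, Units.val_mul, Int.cast_mul]
    ring
  have hsum : ∑ σ : Equiv.Perm (Fin n), ((Equiv.Perm.sign σ : ℤ) : F) *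
        (robbinsProd w (x⁻¹ ∘ σ) * strictGeomSeries (x⁻¹ ∘ σ))
      = s * c⁻¹ * ((-1) ^ n * ∏ i, x i) * ∑ σ : Equiv.Perm (Fin n),
        ((Equiv.Perm.sign σ : ℤ) : F) * (robbinsProd w (x ∘ σ) * weakGeomSeries (x ∘ σ)) := by
    rw [← Equiv.sum_comp (Equiv.mulRight Fin.revPerm), mul_sum]
    exact sum_congr rfl fun σ _ => hterm σ
  rw [hsum, Fin.prod_prod_Ioi_inv_sub_inv hx, prod_inv_distrib]
  have hunit : (-1) ^ n * (∏ i, x i)⁻¹ * ((-1) ^ n * ∏ i, x i) = 1 := by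
    rw [mul_mul_mul_comm, ← mul_pow, inv_mul_cancel₀ hx₀]
    simp
  rw [mul_assoc (s * c⁻¹), mul_div_mul_left _ _ hsc, mul_div_assoc, ← mul_assoc, hunit, one_mul]

end Robbins

theorem stmt7_general (n : ℕ) :
    letI K := FractionRing (MvPolynomial (Option (Fin n)) ℚ)
    letI x : Fin n → K := fun i =>
      algebraMap (MvPolynomial (Option (Fin n)) ℚ) K (MvPolynomial.X (some i))
    letI w : K := algebraMap (MvPolynomial (Option (Fin n)) ℚ) K (MvPolynomial.X none)
    -- sum over weakly decreasing tuples, via geometric series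
    (∑ σ : Equiv.Perm (Fin n), ((Equiv.Perm.sign σ : ℤ) : K) *
        ((∏ i : Fin n, ∏ j ∈ Finset.univ.filter (fun j => i < j),
            (x (σ i) * x (σ j) + 1 + w * x (σ i))) *
          ∏ i : Fin n,
            (1 - ∏ j ∈ Finset.univ.filter (fun j => j ≤ i), x (σ j))⁻¹)) /
      (∏ i : Fin n, ∏ j ∈ Finset.univ.filter (fun j => i < j), (x j - x i))
    = (-1 : K) ^ n * (∏ i : Fin n, (x i)⁻¹) *
      -- sum over strictly increasing tuples in the variables x_i⁻¹, via geometric series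
      ((∑ σ : Equiv.Perm (Fin n), ((Equiv.Perm.sign σ : ℤ) : K) *
          ((∏ i : Fin n, ∏ j ∈ Finset.univ.filter (fun j => i < j),
              ((x (σ i))⁻¹ * (x (σ j))⁻¹ + 1 + w * (x (σ i))⁻¹)) *
            ∏ i : Fin n, ((x (σ i))⁻¹ ^ (i : ℕ) *
              (1 - ∏ j ∈ Finset.univ.filter (fun j => i ≤ j), (x (σ j))⁻¹)⁻¹))) /
        (∏ i : Fin n, ∏ j ∈ Finset.univ.filter (fun j => i < j), ((x j)⁻¹ - (x i)⁻¹))) := by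
  let ι := algebraMap (MvPolynomial (Option (Fin n)) ℚ)
    (FractionRing (MvPolynomial (Option (Fin n)) ℚ))
  have hι : Function.Injective ι := IsFractionRing.injective _ _
  simp only [filter_lt_eq_Ioi, filter_ge_eq_Iic, filter_le_eq_Ici]
  exact Robbins.reciprocity (fun i => ι (MvPolynomial.X (some i))) (ι (MvPolynomial.X none))
    fun i h => MvPolynomial.X_ne_zero (some i) (hι (h.trans (map_zero ι).symm))

/-- Combinatorial reciprocity:
`∑_{k_1 ≥ … ≥ k_n ≥ 0} R*_k(x;1,1,w) = (-1)^n ∏_i x_i⁻¹ ∑_{0 ≤ k_1 < … < k_n} R*_k(x⁻¹;1,1,w)`.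
Both sides are the rational functions in `ℚ(x_1,…,x_n,w)` obtained from the geometric
series evaluations
`∑_{k_1≥…≥k_n≥0} ∏ x_i^{k_i} = ∏_i (1-∏_{j≤i}x_j)⁻¹` and
`∑_{0≤k_1<…<k_n} ∏ x_i^{k_i} = ∏_i x_i^{i-1}(1-∏_{j≥i}x_j)⁻¹` inside the
antisymmetrizer defining the modified Robbins polynomials.  Here the field is
`ℚ(x_1,…,x_n,w) = Frac(ℚ[Option (Fin n)])` with `w = X none`, `x i = X (some i)`. -/
theorem stmt7 (n : ℕ) (hn : 0 < n) :
    letI K := FractionRing (MvPolynomial (Option (Fin n)) ℚ)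
    letI x : Fin n → K := fun i =>
      algebraMap (MvPolynomial (Option (Fin n)) ℚ) K (MvPolynomial.X (some i))
    letI w : K := algebraMap (MvPolynomial (Option (Fin n)) ℚ) K (MvPolynomial.X none)
    -- sum over weakly decreasing tuples, via geometric series
    (∑ σ : Equiv.Perm (Fin n), ((Equiv.Perm.sign σ : ℤ) : K) *
        ((∏ i : Fin n, ∏ j ∈ Finset.univ.filter (fun j => i < j),
            (x (σ i) * x (σ j) + 1 + w * x (σ i))) *
          ∏ i : Fin n,
            (1 - ∏ j ∈ Finset.univ.filter (fun j => j ≤ i), x (σ j))⁻¹)) /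
      (∏ i : Fin n, ∏ j ∈ Finset.univ.filter (fun j => i < j), (x j - x i))
    = (-1 : K) ^ n * (∏ i : Fin n, (x i)⁻¹) *
      -- sum over strictly increasing tuples in the variables x_i⁻¹, via geometric series
      ((∑ σ : Equiv.Perm (Fin n), ((Equiv.Perm.sign σ : ℤ) : K) *
          ((∏ i : Fin n, ∏ j ∈ Finset.univ.filter (fun j => i < j),
              ((x (σ i))⁻¹ * (x (σ j))⁻¹ + 1 + w * (x (σ i))⁻¹)) *
            ∏ i : Fin n, ((x (σ i))⁻¹ ^ (i : ℕ) *
              (1 - ∏ j ∈ Finset.univ.filter (fun j => i ≤ j), (x (σ j))⁻¹)⁻¹))) /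
        (∏ i : Fin n, ∏ j ∈ Finset.univ.filter (fun j => i < j), ((x j)⁻¹ - (x i)⁻¹))) :=
  stmt7_general n
end

section
/- Let n be even and let f(x,y), h(x), k(x) be formal power series with f antisymmetric (f(x,y) = -f(y,x)). Then pf_{0 ≤ i < j ≤ n-1}([u^i v^j] k(u)k(v) f(h(u)u, h(v)v)) = k(0)^n h(0)^{n(n-1)/2} · pf_{0 ≤ i < j ≤ n-1}([u^i v^j] f(u,v)), where [u^i v^j] denotes coefficient extraction and pf denotes the Pfaffian of the n×n skew-symmetric matrix determined by the given upper-triangular entries. -/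
/-!
The substitution `g(u) ↦ k(u) g(h(u) u)` acts on the monomials `u ^ i` by a lower triangular
matrix `S` with diagonal entries `k(0) h(0) ^ i`, and the coefficient array of
`k(u) k(v) f(h(u) u, h(v) v)` is `S F Sᵀ`, where `F` is that of `f`. The identity is therefore
`pf (S F Sᵀ) = det S · pf F`, with `det S = k(0) ^ n h(0) ^ (n (n - 1) / 2)`.
-/

/-- The Pfaffian of a `2m × 2m` matrix (intended to be skew-symmetric), via the
permutation-sum formula `pf(A) = (1/(2^m m!)) ∑_σ sgn(σ) ∏_i A(σ(2i-1), σ(2i))`,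
which agrees with the matching-sum definition over a field of characteristic zero. -/
noncomputable def pfaffian {K : Type*} [Field K] {m : ℕ}
    (A : Matrix (Fin (2 * m)) (Fin (2 * m)) K) : K :=
  (∑ σ : Equiv.Perm (Fin (2 * m)), ((Equiv.Perm.sign σ : ℤ) : K) *
      ∏ i : Fin m, A (σ ⟨2 * i.val, by omega⟩) (σ ⟨2 * i.val + 1, by omega⟩)) /
    ((2 ^ m * Nat.factorial m : ℕ) : K)

/-- The skew-symmetric completion of a triangular array `a i j` (`i < j`), as an
`N × N` matrix. -/
def skewOf {K : Type*} [Field K] {N : ℕ} (a : ℕ → ℕ → K) : Matrix (Fin N) (Fin N) K :=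
  fun i j =>
    if (i : ℕ) < (j : ℕ) then a i j
    else if (j : ℕ) < (i : ℕ) then -(a j i) else 0

open Finset Matrix Equiv

theorem Matrix.sum_mul_det_submatrix {n R : Type*} [Fintype n] [DecidableEq n] [CommRing R]
    (M : Matrix n n R) (P : (n → n) → R) :
    ∑ τ : n → n, P τ * (M.submatrix id τ).det
      = M.det * ∑ σ : Perm n, ((Perm.sign σ : ℤ) : R) * P σ := by
  have hvanish : ∀ τ ∉ univ.map ⟨((⇑) : Perm n → n → n), DFunLike.coe_injective⟩,
      P τ * (M.submatrix id τ).det = 0 := by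
    intro τ hτ
    obtain ⟨i, j, hij, hne⟩ : ∃ i j, τ i = τ j ∧ i ≠ j := by
      by_contra! hinj
      exact hτ (mem_map.mpr ⟨ofBijective τ (Finite.injective_iff_bijective.mp hinj),
        mem_univ _, rfl⟩)
    rw [det_zero_of_column_eq hne (fun k => by simp [hij]), mul_zero]
  rw [← sum_subset (subset_univ _) fun τ _ => hvanish τ, sum_map, mul_sum]
  refine sum_congr rfl fun σ _ => ?_
  simp only [Function.Embedding.coeFn_mk]
  rw [det_permute']
  ring

def finPairEquiv (m : ℕ) : Fin m × Fin 2 ≃ Fin (2 * m) :=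
  finProdFinEquiv.trans (finCongr (mul_comm m 2))

@[simp] lemma finPairEquiv_apply_zero {m : ℕ} (i : Fin m) :
    finPairEquiv m (i, 0) = ⟨2 * i, by omega⟩ := by
  ext; simp [finPairEquiv]

@[simp] lemma finPairEquiv_apply_one {m : ℕ} (i : Fin m) :
    finPairEquiv m (i, 1) = ⟨2 * i + 1, by omega⟩ := by
  ext; simp [finPairEquiv]; ring

lemma Fin.prod_univ_eq_prod_pairs {M : Type*} [CommMonoid M] {m : ℕ} (F : Fin (2 * m) → M) :
    ∏ j, F j = ∏ i : Fin m, F ⟨2 * i, by omega⟩ * F ⟨2 * i + 1, by omega⟩ := by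
  rw [← (finPairEquiv m).prod_comp, Fintype.prod_prod_type]
  simp [Fin.prod_univ_two]

def pairTupleEquiv (m : ℕ) (α : Type*) : (Fin m → α × α) ≃ (Fin (2 * m) → α) :=
  ((arrowCongr (.refl _) (piFinTwoEquiv fun _ => α).symm).trans (curry _ _ _).symm).trans
    (arrowCongr (finPairEquiv m) (.refl α))

@[simp] lemma pairTupleEquiv_apply_two_mul {m : ℕ} {α : Type*} (g : Fin m → α × α) (i : Fin m) :
    pairTupleEquiv m α g ⟨2 * i, by omega⟩ = (g i).1 := by
  rw [← finPairEquiv_apply_zero]; simp [pairTupleEquiv, -finPairEquiv_apply_zero]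

@[simp] lemma pairTupleEquiv_apply_two_mul_add_one {m : ℕ} {α : Type*} (g : Fin m → α × α)
    (i : Fin m) : pairTupleEquiv m α g ⟨2 * i + 1, by omega⟩ = (g i).2 := by
  rw [← finPairEquiv_apply_one]; simp [pairTupleEquiv, -finPairEquiv_apply_one]

lemma Matrix.mul_mul_transpose_apply {n R : Type*} [Fintype n] [CommSemiring R]
    (M A : Matrix n n R) (x y : n) :
    (M * A * Mᵀ) x y = ∑ p, ∑ q, M x p * A p q * M y q := by
  simp only [mul_apply, transpose_apply, sum_mul]
  exact sum_comm

theorem pfaffian_mul_mul_transpose {K : Type*} [Field K] {m : ℕ}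
    (M A : Matrix (Fin (2 * m)) (Fin (2 * m)) K) :
    pfaffian (M * A * Mᵀ) = M.det * pfaffian A := by
  unfold pfaffian
  rw [mul_div_assoc']
  congr 1
  set P : (Fin (2 * m) → Fin (2 * m)) → K :=
    fun τ => ∏ i : Fin m, A (τ ⟨2 * i, by omega⟩) (τ ⟨2 * i + 1, by omega⟩)
  have expand : ∀ σ : Perm (Fin (2 * m)),
      ∏ i : Fin m, (M * A * Mᵀ) (σ ⟨2 * i, by omega⟩) (σ ⟨2 * i + 1, by omega⟩)
        = ∑ τ, P τ * ∏ j, M (σ j) (τ j) := by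
    intro σ
    simp only [mul_mul_transpose_apply, ← Fintype.sum_prod_type', Fintype.prod_sum]
    rw [← (pairTupleEquiv m _).sum_comp]
    refine sum_congr rfl fun g _ => ?_
    simp only [P, Fin.prod_univ_eq_prod_pairs fun j => M (σ j) _, pairTupleEquiv_apply_two_mul,
      pairTupleEquiv_apply_two_mul_add_one, ← prod_mul_distrib]
    exact prod_congr rfl fun i _ => by ring
  calc ∑ σ : Perm (Fin (2 * m)), ((Perm.sign σ : ℤ) : K) *
        ∏ i : Fin m, (M * A * Mᵀ) (σ ⟨2 * i, by omega⟩) (σ ⟨2 * i + 1, by omega⟩)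
      = ∑ τ, P τ * (M.submatrix id τ).det := by
        simp only [expand, mul_sum, det_apply, Units.smul_def, zsmul_eq_mul, submatrix_apply,
          id]
        rw [sum_comm]
        exact sum_congr rfl fun τ _ => sum_congr rfl fun σ _ => by ring
    _ = M.det * ∑ σ : Perm (Fin (2 * m)), ((Perm.sign σ : ℤ) : K) * P σ :=
        sum_mul_det_submatrix M P

lemma skewOf_eq_of_transpose_eq_neg {K : Type*} [Field K] [CharZero K] {N : ℕ}
    {B : Matrix (Fin N) (Fin N) K} (hB : Bᵀ = -B) {a : ℕ → ℕ → K}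
    (ha : ∀ i j : Fin N, i < j → a i j = B i j) : skewOf a = B := by
  have hBij : ∀ i j, B j i = -B i j := fun i j => congrFun (congrFun hB i) j
  ext i j
  rcases lt_trichotomy i j with hij | rfl | hji
  · simp [skewOf, Fin.lt_def.mp hij, ha i j hij]
  · simpa [skewOf] using (CharZero.eq_neg_self_iff.mp (hBij i i)).symm
  · simp only [skewOf, if_neg (not_lt_of_gt (Fin.lt_def.mp hji)),
      if_pos (Fin.lt_def.mp hji)]
    rw [ha j i hji, hBij j i]

namespace PowerSeries

variable {R : Type*} [CommSemiring R]

lemma coeff_mul_mul_X_pow_of_lt (h k : R⟦X⟧) {a i : ℕ} (hai : a < i) :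
    coeff a (k * (h * X) ^ i) = 0 := by
  rw [mul_pow, ← mul_assoc, coeff_mul_X_pow', if_neg (by omega)]

lemma coeff_mul_mul_X_pow_self (h k : R⟦X⟧) (i : ℕ) :
    coeff i (k * (h * X) ^ i) = constantCoeff k * constantCoeff h ^ i := by
  rw [mul_pow, ← mul_assoc, coeff_mul_X_pow', if_pos le_rfl, Nat.sub_self,
    coeff_zero_eq_constantCoeff, map_mul, map_pow]

end PowerSeries

open PowerSeries

section SubstMatrix

variable {R : Type*} [CommSemiring R] (N : ℕ) (h k : R⟦X⟧)

/-- The matrix of `g(u) ↦ k(u) g(h(u) u)` on the monomials `u ^ i`, `i < N`. -/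
noncomputable def substMatrix : Matrix (Fin N) (Fin N) R :=
  of fun a i => coeff a (k * (h * X) ^ (i : ℕ))

lemma substMatrix_isLowerTriangular : (substMatrix N h k).IsLowerTriangular :=
  fun _ _ hai => coeff_mul_mul_X_pow_of_lt h k hai

variable {N}

lemma sum_range_succ_coeff_mul_eq_sum_substMatrix (x : Fin N) (F : ℕ → R) :
    ∑ i ∈ range (x + 1), coeff x (k * (h * X) ^ i) * F i
      = ∑ i : Fin N, substMatrix N h k x i * F i := by
  rw [sum_subset (range_subset_range.mpr x.isLt) fun i _ hi => ?_]
  · exact (Fin.sum_univ_eq_sum_range (fun i => coeff x (k * (h * X) ^ i) * F i) N).symm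
  · rw [coeff_mul_mul_X_pow_of_lt h k (by simpa using hi), zero_mul]

lemma sum_coeff_eq_substMatrix_mul_mul_transpose (f : ℕ → ℕ → R) (x y : Fin N) :
    ∑ i ∈ range (x + 1), ∑ j ∈ range (y + 1),
        f i j * coeff x (k * (h * X) ^ i) * coeff y (k * (h * X) ^ j)
      = (substMatrix N h k * of (fun p q : Fin N => f p q) * (substMatrix N h k)ᵀ) x y := by
  calc _ = ∑ i ∈ range (x + 1), coeff x (k * (h * X) ^ i) *
          ∑ j ∈ range (y + 1), coeff y (k * (h * X) ^ j) * f i j := by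
        simp only [mul_sum]
        exact sum_congr rfl fun i _ => sum_congr rfl fun j _ => by ring
    _ = ∑ p : Fin N, substMatrix N h k x p * ∑ q : Fin N, substMatrix N h k y q * f p q := by
        simp only [sum_range_succ_coeff_mul_eq_sum_substMatrix]
    _ = _ := by
        simp only [mul_mul_transpose_apply, of_apply, mul_sum]
        exact sum_congr rfl fun p _ => sum_congr rfl fun q _ => by ring

end SubstMatrix

lemma det_substMatrix {R : Type*} [CommRing R] (N : ℕ) (h k : R⟦X⟧) :
    (substMatrix N h k).det = constantCoeff k ^ N * constantCoeff h ^ (N * (N - 1) / 2) := by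
  rw [det_of_isLowerTriangular _ (substMatrix_isLowerTriangular N h k)]
  simp only [substMatrix, of_apply, coeff_mul_mul_X_pow_self, prod_mul_distrib, prod_const,
    card_univ, Fintype.card_fin, prod_pow_eq_pow_sum, Fin.sum_univ_eq_sum_range (fun i => i),
    sum_range_id]

/-- Since `(h X) ^ i` has order at least `i`, the coefficient `[u^a v^b] k(u)k(v) f(h(u)u, h(v)v)`
is the finite double sum below. -/
theorem stmt8 (m : ℕ) (f : ℕ → ℕ → ℚ) (hf : ∀ i j, f i j = - f j i)
    (h k : PowerSeries ℚ) :
    pfaffian (skewOf (N := 2 * m) (fun a b =>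
        ∑ i ∈ Finset.range (a + 1), ∑ j ∈ Finset.range (b + 1),
          f i j * PowerSeries.coeff a (k * (h * PowerSeries.X) ^ i) *
            PowerSeries.coeff b (k * (h * PowerSeries.X) ^ j)))
    = (PowerSeries.constantCoeff k) ^ (2 * m) *
        (PowerSeries.constantCoeff h) ^ (m * (2 * m - 1)) *
        pfaffian (skewOf (N := 2 * m) f) := by
  set S := substMatrix (2 * m) h k
  set A : Matrix (Fin (2 * m)) (Fin (2 * m)) ℚ := of fun p q => f p q
  have hA : Aᵀ = -A := by ext p q; exact hf q p
  have hSAS : (S * A * Sᵀ)ᵀ = -(S * A * Sᵀ) := by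
    rw [transpose_mul, transpose_mul, transpose_transpose, hA, neg_mul, mul_neg, mul_assoc]
  rw [skewOf_eq_of_transpose_eq_neg hSAS fun x y _ =>
      sum_coeff_eq_substMatrix_mul_mul_transpose h k f x y,
    skewOf_eq_of_transpose_eq_neg hA fun _ _ _ => rfl, pfaffian_mul_mul_transpose,
    det_substMatrix, mul_assoc 2 m, Nat.mul_div_cancel_left _ two_pos]
end

section
/- Let F(x_1,...,x_n) = ∑_{0 ≤ k_1 < ... < k_n} R*_{(k_1,...,k_n)}(x_1,...,x_n; 1,1,w). Then F satisfies the recurrence F(x_1,...,x_n) = (1 - ∏_{i=1}^{n} x_i)^{-1} ∑_{k=1}^{n} ∏_{i ≠ k} ((x_i x_k + 1 + w x_k) x_i)/(x_i - x_k) · F(x_1,...,x̂_k,...,x_n), with F(x_1) = 1/(1-x_1), where x̂_k denotes omission of x_k. -/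
noncomputable section

/-- `F(x_1,…,x_n) = asym[∏_{1≤i<j≤n}(x_i x_j + 1 + w x_i)
      ∏_{i=1}^n x_i^{i-1} (1 - ∏_{j=i}^n x_j)^{-1}] / ∏_{1≤i<j≤n}(x_j - x_i)`,
the generating rational function
`F = ∑_{0 ≤ k_1 < … < k_n} R*_{(k_1,…,k_n)}(x_1,…,x_n;1,1,w)`. -/
def Ffun {K : Type*} [Field K] (w : K) (n : ℕ) (x : Fin n → K) : K :=
  (∑ σ : Equiv.Perm (Fin n), ((Equiv.Perm.sign σ : ℤ) : K) *
      ((∏ i : Fin n, ∏ j ∈ Finset.univ.filter (fun j => i < j),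
          (x (σ i) * x (σ j) + 1 + w * x (σ i))) *
        ∏ i : Fin n, (x (σ i) ^ (i : ℕ) *
          (1 - ∏ j ∈ Finset.univ.filter (fun j => i ≤ j), x (σ j))⁻¹))) /
    ∏ i : Fin n, ∏ j ∈ Finset.univ.filter (fun j => i < j), (x j - x i)

/-- The field of rational functions `ℚ(w, x_1, x_2, …)`, with `w = X 0`, `x_i = X i`. -/
abbrev KK : Type := FractionRing (MvPolynomial ℕ ℚ)

/-- The indeterminate `x_i`. -/
def xx (i : ℕ) : KK := algebraMap (MvPolynomial ℕ ℚ) KK (MvPolynomial.X i)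

/-- The indeterminate `w`. -/
def ww : KK := algebraMap (MvPolynomial ℕ ℚ) KK (MvPolynomial.X 0)

/-! `F` is an alternant divided by the Vandermonde determinant. Sorting the permutations `σ` of
the alternant by `k = σ 0` writes `σ` as "`k` first, then a permutation `τ` of the other
indices", of sign `(-1)^k sign τ`. In the summand, the factors involving the first position are
`(1 - ∏ x)⁻¹ ∏_{i≠k} (x_k x_i + 1 + w x_k) x_i`, which is symmetric in the other variables, and
what remains is the summand for `x̂_k`. Expanding the Vandermonde determinant in the same way
gives `(-1)^k ∏_{i≠k} (x_i - x_k)` times the smaller determinant, so the signs cancel. The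
initial condition is the case `n = 1` of the recurrence, as `F() = 1`. -/

open Finset Equiv Matrix

section Antisymmetrization

variable {α R : Type*} [CommRing R]

def asym {n : ℕ} (f : (Fin n → α) → R) (x : Fin n → α) : R :=
  ∑ σ : Perm (Fin n), ((Perm.sign σ : ℤ) : R) * f (x ∘ σ)

/-- `consPerm k τ` sends `0` to `k` and `i.succ` to `k.succAbove (τ i)`. -/
def consPerm {m : ℕ} (k : Fin (m + 1)) (τ : Perm (Fin m)) : Perm (Fin (m + 1)) :=
  k.cycleRange.symm * Perm.decomposeFin.symm (0, τ)

lemma comp_consPerm {m : ℕ} (x : Fin (m + 1) → α) (k : Fin (m + 1)) (τ : Perm (Fin m)) :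
    x ∘ consPerm k τ = Fin.cons (x k) (x ∘ k.succAbove ∘ τ) := by
  ext i
  cases i using Fin.cases <;>
    simp [consPerm, Perm.decomposeFin_symm_apply_zero, Perm.decomposeFin_symm_apply_succ]

lemma sign_consPerm {m : ℕ} (k : Fin (m + 1)) (τ : Perm (Fin m)) :
    Perm.sign (consPerm k τ) = (-1) ^ (k : ℕ) * Perm.sign τ := by
  simp [consPerm, Perm.decomposeFin.symm_sign, Fin.sign_cycleRange]

lemma consPerm_bijective {m : ℕ} :
    Function.Bijective (fun p : Fin (m + 1) × Perm (Fin m) => consPerm p.1 p.2) := by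
  rw [Fintype.bijective_iff_injective_and_card]
  refine ⟨fun ⟨k, τ⟩ ⟨k', τ'⟩ h => ?_, by simp [Fintype.card_perm, Nat.factorial_succ]⟩
  obtain rfl : k = k' := by
    simpa [consPerm, Perm.decomposeFin_symm_apply_zero] using congrArg (· 0) h
  have := Perm.decomposeFin.symm.injective (mul_left_cancel (h : consPerm k τ = consPerm k τ'))
  simp_all

lemma asym_succ {m : ℕ} (f : (Fin (m + 1) → α) → R) (x : Fin (m + 1) → α) :
    asym f x = ∑ k : Fin (m + 1), (-1) ^ (k : ℕ) *
      asym (fun y => f (Fin.cons (x k) y)) (x ∘ k.succAbove) := by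
  rw [asym, ← Fintype.sum_bijective _ consPerm_bijective _ _ fun _ => rfl,
    Fintype.sum_prod_type]
  refine sum_congr rfl fun k _ => ?_
  simp only [asym, mul_sum, sign_consPerm, comp_consPerm]
  push_cast
  simp only [mul_assoc, Function.comp_assoc]

end Antisymmetrization

lemma prod_erase_eq_prod_succAbove {M : Type*} [CommMonoid M] {m : ℕ} (k : Fin (m + 1))
    (f : Fin (m + 1) → M) : ∏ i ∈ univ.erase k, f i = ∏ i : Fin m, f (k.succAbove i) := by
  rw [Fin.univ_succAbove _ k, erase_cons, prod_map]
  rfl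

lemma det_vandermonde_eq_succAbove {R : Type*} [CommRing R] {m : ℕ} (x : Fin (m + 1) → R)
    (k : Fin (m + 1)) :
    (vandermonde x).det =
      (-1) ^ (k : ℕ) * (∏ i, (x (k.succAbove i) - x k)) *
        (vandermonde (x ∘ k.succAbove)).det := by
  have hcons : (vandermonde (x ∘ k.cycleRange.symm)).det =
      (∏ i, (x (k.succAbove i) - x k)) * (vandermonde (x ∘ k.succAbove)).det := by
    rw [← Fin.cons_removeNth_eq_comp_cycleRange_symm, det_vandermonde, det_vandermonde,
      Fin.prod_univ_succ, Fin.prod_Ioi_zero]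
    simp [Fin.removeNth]
  have hperm : (vandermonde (x ∘ k.cycleRange.symm)).det =
      (-1) ^ (k : ℕ) * (vandermonde x).det := by
    rw [show vandermonde (x ∘ k.cycleRange.symm) = (vandermonde x).submatrix k.cycleRange.symm id
      from rfl, det_permute]
    simp [Fin.sign_cycleRange]
  rw [mul_assoc, ← hcons, hperm, ← mul_assoc, ← pow_add, ← two_mul, pow_mul]
  simp

section Recurrence

variable {K : Type*} [Field K]

def FfunTerm (w : K) (n : ℕ) (z : Fin n → K) : K :=
  (∏ i : Fin n, ∏ j ∈ univ.filter (fun j => i < j), (z i * z j + 1 + w * z i)) *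
    ∏ i : Fin n, (z i ^ (i : ℕ) * (1 - ∏ j ∈ univ.filter (fun j => i ≤ j), z j)⁻¹)

lemma Ffun_eq_asym_div_det (w : K) (n : ℕ) (x : Fin n → K) :
    Ffun w n x = asym (FfunTerm w n) x / (vandermonde x).det := by
  simp only [Ffun, asym, FfunTerm, det_vandermonde, filter_lt_eq_Ioi]
  rfl

lemma FfunTerm_cons (w a : K) {m : ℕ} (y : Fin m → K) :
    FfunTerm w (m + 1) (Fin.cons a y) =
      (1 - a * ∏ i, y i)⁻¹ * (∏ i, (a * y i + 1 + w * a) * y i) * FfunTerm w m y := by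
  simp only [FfunTerm, filter_lt_eq_Ioi, filter_le_eq_Ici, Fin.prod_univ_succ (n := m),
    Fin.prod_Ioi_zero, Fin.prod_Ioi_succ, Fin.prod_Ici_succ, Fin.cons_zero, Fin.cons_succ,
    Fin.val_zero, pow_zero, one_mul]
  rw [← bot_eq_zero, Ici_bot, Fin.prod_univ_succ]
  simp only [Fin.cons_zero, Fin.cons_succ, Fin.val_succ, pow_succ, prod_mul_distrib]
  ring

lemma asym_FfunTerm_cons (w a : K) {m : ℕ} (y : Fin m → K) :
    asym (fun z => FfunTerm w (m + 1) (Fin.cons a z)) y =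
      (1 - a * ∏ i, y i)⁻¹ * (∏ i, (a * y i + 1 + w * a) * y i) * asym (FfunTerm w m) y := by
  simp only [asym, FfunTerm_cons, mul_sum]
  refine sum_congr rfl fun σ _ => ?_
  rw [Function.comp_def, Equiv.prod_comp σ y,
    Equiv.prod_comp σ fun i => (a * y i + 1 + w * a) * y i]
  ring

lemma Ffun_succ (w : K) {m : ℕ} (x : Fin (m + 1) → K) (hx : Function.Injective x) :
    Ffun w (m + 1) x = (1 - ∏ i, x i)⁻¹ * ∑ k : Fin (m + 1),
      (∏ i ∈ univ.erase k, ((x i * x k + 1 + w * x k) * x i) / (x i - x k)) *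
        Ffun w m (x ∘ k.succAbove) := by
  rw [Ffun_eq_asym_div_det, asym_succ, sum_div, mul_sum]
  refine sum_congr rfl fun k _ => ?_
  have hV : (vandermonde (x ∘ k.succAbove)).det ≠ 0 :=
    det_vandermonde_ne_zero_iff.mpr (hx.comp Fin.succAbove_right_injective)
  have hE : ∏ i, (x (k.succAbove i) - x k) ≠ 0 :=
    prod_ne_zero_iff.mpr fun i _ => sub_ne_zero.mpr (hx.ne (Fin.succAbove_ne k i))
  rw [asym_FfunTerm_cons, det_vandermonde_eq_succAbove x k, Ffun_eq_asym_div_det,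
    prod_erase_eq_prod_succAbove, prod_div_distrib,
    show x k * ∏ i, (x ∘ k.succAbove) i = ∏ i, x i from (Fin.prod_univ_succAbove x k).symm]
  field_simp
  simp only [Function.comp_apply]
  ring

lemma Ffun_zero (w : K) (x : Fin 0 → K) : Ffun w 0 x = 1 := by
  simp [Ffun]

lemma Ffun_one (w y : K) : Ffun w 1 ![y] = (1 - y)⁻¹ := by
  rw [Ffun_succ w ![y] fun i j _ => Subsingleton.elim (α := Fin 1) i j]
  simp [Ffun_zero]

end Recurrence

lemma xx_injective : Function.Injective xx := fun _ _ h =>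
  MvPolynomial.X_injective (IsFractionRing.injective (MvPolynomial ℕ ℚ) KK h)

/-- The recurrence for `F(x_1,…,x_n) = ∑_{0≤k_1<…<k_n} R*_k(x;1,1,w)` (here `n = m+1`):
`F(x_1,…,x_n) = (1 - ∏ x_i)⁻¹ ∑_k ∏_{i≠k} ((x_i x_k + 1 + w x_k) x_i)/(x_i - x_k)
  · F(x_1,…,x̂_k,…,x_n)`, together with the initial condition `F(x_1) = 1/(1-x_1)`. -/
theorem stmt14 (m : ℕ) :
    (Ffun ww (m + 1) (fun i => xx ((i : ℕ) + 1))
      = (1 - ∏ i : Fin (m + 1), xx ((i : ℕ) + 1))⁻¹ *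
        ∑ k : Fin (m + 1),
          (∏ i ∈ Finset.univ.erase k,
            ((xx ((i : ℕ) + 1) * xx ((k : ℕ) + 1) + 1 + ww * xx ((k : ℕ) + 1)) *
                xx ((i : ℕ) + 1)) /
              (xx ((i : ℕ) + 1) - xx ((k : ℕ) + 1))) *
          Ffun ww m ((fun i : Fin (m + 1) => xx ((i : ℕ) + 1)) ∘ k.succAbove))
    ∧ ∀ y : KK, Ffun ww 1 ![y] = (1 - y)⁻¹ :=
  ⟨Ffun_succ ww _ (xx_injective.comp ((add_left_injective 1).comp Fin.val_injective)),
    Ffun_one ww⟩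

end
end

section
/- Define F̃(x_1,...,x_n) = ∏_{i=1}^n (1-x_i) ∏_{1≤i<j≤n} (1 - x_i x_j) · F(x_1,...,x_n), where F(x_1,...,x_n) = asym_{x_1,...,x_n}[∏_{1≤i<j≤n}(x_i x_j + 1 + w x_i) ∏_{i=1}^n x_i^{i-1}(1 - ∏_{j=i}^n x_j)^{-1}] / ∏_{1≤i<j≤n}(x_j - x_i). Then for n > 1, F̃(x_1,...,x_n)|_{x_n = 1} = ∏_{k=1}^{n-1} (1 + x_k + w x_k) · F̃(x_1,...,x_{n-1}). -/
/-!
Put `x_n = T`. In the `σ`-summand of `F̃`, the factor `1 - x_{σ(n)}` of `∏ (1 - x_i)` cancels the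
factor `(1 - x_{σ(n)})⁻¹` of the asymmetrized product, and the summand becomes a fraction whose
denominator, the Vandermonde product times the `1 - x_{σ(i)} ⋯ x_{σ(n)}` with `i < n`, does not
vanish at `T = 1` for generic `x_1, …, x_{n-1}`. Hence `F̃` can be evaluated at `T = 1` summand by
summand. The numerator keeps `∏_{i ≠ σ(n)} (1 - x_i)`, which vanishes at `T = 1` unless `σ` fixes
`n`. For such `σ` the pairs `(i, n)` contribute `∏_{i<n} (1 - x_i)` both to `∏_{i<j} (1 - x_i x_j)`
and to the Vandermonde product, where they cancel, and `∏_k (x_k + 1 + w x_k)` to the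
asymmetrized product; what remains is the summand of `F̃(x_1, …, x_{n-1})` for `σ` restricted to
`{1, …, n-1}`.
-/

noncomputable section

def Ftilde {K : Type*} [Field K] (w : K) (n : ℕ) (x : Fin n → K) : K :=
  (∏ i : Fin n, (1 - x i)) *
    (∏ i : Fin n, ∏ j ∈ Finset.univ.filter (fun j => i < j), (1 - x i * x j)) *
    Ffun w n x

universe u

open Finset Function
open scoped Polynomial

namespace RatFunc

variable {K L : Type u} [Field K] [Field L] {f : K →+* L} {a : L}

lemma eval₂_denom_add_ne_zero {x y : RatFunc K} (hx : (denom x).eval₂ f a ≠ 0)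
    (hy : (denom y).eval₂ f a ≠ 0) : (denom (x + y)).eval₂ f a ≠ 0 := fun h =>
  mul_ne_zero hx hy <| by
    rw [← Polynomial.eval₂_mul]
    exact Polynomial.eval₂_eq_zero_of_dvd_of_eval₂_eq_zero f a (denom_add_dvd x y) h

lemma eval_sum {ι : Type*} (s : Finset ι) (g : ι → RatFunc K)
    (hg : ∀ i ∈ s, (denom (g i)).eval₂ f a ≠ 0) :
    eval f a (∑ i ∈ s, g i) = ∑ i ∈ s, eval f a (g i) := by
  classical
  induction s using Finset.induction_on with
  | empty => simp
  | insert b s hb ih =>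
    have hs : ∀ i ∈ s, (denom (g i)).eval₂ f a ≠ 0 := fun i hi => hg i (mem_insert_of_mem hi)
    rw [sum_insert hb, sum_insert hb, eval_add f a (hg b (mem_insert_self b s)), ih hs]
    exact sum_induction _ (fun x => (denom x).eval₂ f a ≠ 0)
      (fun _ _ => eval₂_denom_add_ne_zero) (by simp) hs

lemma eval₂_denom_div_ne_zero {P Q : K[X]} (hQ : Q.eval₂ f a ≠ 0) :
    (denom (algebraMap _ (RatFunc K) P / algebraMap _ _ Q)).eval₂ f a ≠ 0 := fun h =>
  hQ (Polynomial.eval₂_eq_zero_of_dvd_of_eval₂_eq_zero f a (denom_div_dvd P Q) h)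

lemma eval_algebraMap_div {P Q : K[X]} (hQ : Q.eval₂ f a ≠ 0) :
    eval f a (algebraMap _ (RatFunc K) P / algebraMap _ _ Q) = P.eval₂ f a / Q.eval₂ f a := by
  have hQ0 : algebraMap K[X] (RatFunc K) Q ≠ 0 := algebraMap_ne_zero (by rintro rfl; simp at hQ)
  have h := eval_mul f a (eval₂_denom_div_ne_zero (P := P) hQ) (y := algebraMap _ _ Q)
    (by simp [denom_algebraMap])
  rw [div_mul_cancel₀ _ hQ0, eval_algebraMap, eval_algebraMap] at h
  simp only [Algebra.algebraMap_self, RingHom.id_apply] at h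
  exact eq_div_of_mul_eq hQ h.symm

lemma eval_sum_algebraMap_div {ι : Type*} (s : Finset ι) (N D : ι → K[X])
    (hD : ∀ i ∈ s, (D i).eval₂ f a ≠ 0) :
    eval f a (∑ i ∈ s, algebraMap _ (RatFunc K) (N i) / algebraMap _ _ (D i)) =
      ∑ i ∈ s, (N i).eval₂ f a / (D i).eval₂ f a := by
  rw [eval_sum s _ fun i hi => eval₂_denom_div_ne_zero (hD i hi)]
  exact sum_congr rfl fun i hi => eval_algebraMap_div (hD i hi)

end RatFunc

namespace Equiv.Perm

lemma sum_eq_sum_extendDomain {α β M : Type*} [Fintype α] [DecidableEq α] [Fintype β]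
    [DecidableEq β] [AddCommMonoid M] (a : α) (e : β ≃ {x // x ≠ a}) (v : Perm α → M)
    (hv : ∀ σ : Perm α, σ a ≠ a → v σ = 0) :
    ∑ σ, v σ = ∑ τ : Perm β, v (τ.extendDomain e) := by
  rw [← sum_filter_of_ne (p := fun σ => σ a = a) fun σ _ h => not_not.mp (mt (hv σ) h),
    sum_subtype (p := fun σ : Perm α => ∀ x, ¬x ≠ a → σ x = x) _ (by simp),
    ← (Perm.subtypeEquivSubtypePerm (· ≠ a)).sum_comp, ← (permCongr e).sum_comp]
  rfl

variable {n : ℕ}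

def extendLast (τ : Perm (Fin n)) : Perm (Fin (n + 1)) :=
  τ.extendDomain (finSuccAboveEquiv (Fin.last n))

@[simp]
lemma extendLast_last (τ : Perm (Fin n)) : τ.extendLast (Fin.last n) = Fin.last n :=
  extendDomain_apply_not_subtype _ _ (by simp)

@[simp]
lemma extendLast_castSucc (τ : Perm (Fin n)) (i : Fin n) :
    τ.extendLast i.castSucc = (τ i).castSucc := by
  simpa [extendLast, finSuccAboveEquiv_apply, Fin.succAbove_last] using
    extendDomain_apply_image τ (finSuccAboveEquiv (Fin.last n)) i

@[simp]
lemma sign_extendLast (τ : Perm (Fin n)) : sign τ.extendLast = sign τ :=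
  sign_extendDomain τ _

lemma sum_eq_sum_extendLast {M : Type*} [AddCommMonoid M] (v : Perm (Fin (n + 1)) → M)
    (hv : ∀ σ : Perm (Fin (n + 1)), σ (Fin.last n) ≠ Fin.last n → v σ = 0) :
    ∑ σ, v σ = ∑ τ : Perm (Fin n), v τ.extendLast :=
  sum_eq_sum_extendDomain _ _ v hv

end Equiv.Perm

namespace Fin

variable {n : ℕ}

lemma filter_castSucc_lt (i : Fin n) :
    univ.filter (fun j => i.castSucc < j) =
      insert (last n) ((univ.filter (fun j => i < j)).map castSuccEmb) := by
  ext j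
  induction j using lastCases <;> simp [castSucc_lt_last, (castSucc_lt_last _).ne]

lemma filter_castSucc_le (i : Fin n) :
    univ.filter (fun j => i.castSucc ≤ j) =
      insert (last n) ((univ.filter (fun j => i ≤ j)).map castSuccEmb) := by
  ext j
  induction j using lastCases <;> simp [le_last, (castSucc_lt_last _).ne]

lemma prod_filter_castSucc_le {M : Type*} [CommMonoid M] (i : Fin n) (g : Fin (n + 1) → M) :
    ∏ j ∈ univ.filter (fun j => i.castSucc ≤ j), g j =
      (∏ j ∈ univ.filter (fun j => i ≤ j), g j.castSucc) * g (last n) := by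
  rw [filter_castSucc_le, prod_insert (by simp [(castSucc_lt_last _).ne]), prod_map, mul_comm]
  rfl

lemma prod_prod_filter_lt_succ {M : Type*} [CommMonoid M] (g : Fin (n + 1) → Fin (n + 1) → M) :
    ∏ i, ∏ j ∈ univ.filter (fun j => i < j), g i j =
      (∏ i : Fin n, ∏ j ∈ univ.filter (fun j => i < j), g i.castSucc j.castSucc) *
        ∏ i : Fin n, g i.castSucc (last n) := by
  rw [prod_univ_castSucc, filter_eq_empty_iff.mpr (by simp [le_last]), prod_empty, mul_one,
    ← prod_mul_distrib]
  refine prod_congr rfl fun i _ => ?_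
  rw [filter_castSucc_lt, prod_insert (by simp [(castSucc_lt_last _).ne]), prod_map, mul_comm]
  rfl

lemma prod_prod_filter_lt_sub_ne_zero {K : Type*} [Field K] {y : Fin n → K} (hy : Injective y) :
    ∏ i, ∏ j ∈ univ.filter (fun j => i < j), (y j - y i) ≠ 0 := by
  simpa [filter_lt_eq_Ioi, Matrix.det_vandermonde] using Matrix.det_vandermonde_ne_zero_iff.mpr hy

lemma one_sub_prod_snoc_one_ne_zero {K : Type*} [Field K] {x : Fin n → K}
    (hx : ∀ s : Finset (Fin n), s.Nonempty → ∏ i ∈ s, x i ≠ 1) {t : Finset (Fin (n + 1))}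
    (ht : ∃ k ∈ t, k ≠ last n) :
    1 - ∏ k ∈ t, snoc x 1 k ≠ 0 := by
  obtain ⟨_, hk, hkl⟩ := ht
  obtain ⟨i, rfl⟩ := exists_castSucc_eq.mpr hkl
  rw [← prod_preimage castSucc t (castSucc_injective n).injOn _ fun k _ hk => by
    rw [range_castSucc] at hk
    rw [last_le_iff.mp (not_lt.mp hk), snoc_last]]
  simp only [snoc_castSucc]
  exact sub_ne_zero.mpr (hx _ ⟨i, by simpa using hk⟩).symm

end Fin

namespace Ftilde

open Equiv

section CommRing

variable {R S : Type*} [CommRing R] [CommRing S] {n : ℕ}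

/- `termNum w y σ / termDen y σ` is the `σ`-summand of `F̃(y)`, the factor `1 - y (σ (last n))`
of `∏ (1 - y i)` being cancelled against the last factor `(1 - y (σ (last n)))⁻¹` of `F(y)`. -/
def termNum (w : R) (y : Fin (n + 1) → R) (σ : Perm (Fin (n + 1))) : R :=
  ((Perm.sign σ : ℤ) : R) * (∏ i : Fin n, (1 - y ((σ (Fin.last n)).succAbove i))) *
    (∏ i, ∏ j ∈ univ.filter (fun j => i < j), (1 - y i * y j)) *
    (∏ i, ∏ j ∈ univ.filter (fun j => i < j), (y (σ i) * y (σ j) + 1 + w * y (σ i))) *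
    ∏ i, y (σ i) ^ (i : ℕ)

def termDen (y : Fin (n + 1) → R) (σ : Perm (Fin (n + 1))) : R :=
  (∏ i, ∏ j ∈ univ.filter (fun j => i < j), (y j - y i)) *
    ∏ i : Fin n, (1 - ∏ j ∈ univ.filter (fun j => i.castSucc ≤ j), y (σ j))

lemma map_termNum (g : R →+* S) (w : R) (y : Fin (n + 1) → R) (σ : Perm (Fin (n + 1))) :
    g (termNum w y σ) = termNum (g w) (g ∘ y) σ := by
  simp [termNum, map_prod]

lemma map_termDen (g : R →+* S) (y : Fin (n + 1) → R) (σ : Perm (Fin (n + 1))) :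
    g (termDen y σ) = termDen (g ∘ y) σ := by
  simp [termDen, map_prod]

end CommRing

variable {K : Type u} [Field K] {n : ℕ}

lemma eq_sum_termNum_div_termDen (w : K) (y : Fin (n + 1) → K) (hy : ∀ i, y i ≠ 1) :
    Ftilde w (n + 1) y = ∑ σ, termNum w y σ / termDen y σ := by
  rw [Ftilde, Ffun, sum_div, mul_sum]
  refine sum_congr rfl fun σ _ => ?_
  have hu : 1 - y (σ (Fin.last n)) ≠ 0 := sub_ne_zero.mpr (hy _).symm
  rw [prod_mul_distrib, prod_inv_distrib, Fin.prod_univ_castSucc (n := n) (f := fun i =>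
      1 - ∏ j ∈ univ.filter (fun j => i ≤ j), y (σ j)),
    Fin.prod_univ_succAbove (fun i => 1 - y i) (σ (Fin.last n))]
  simp only [Fin.last_le_iff, filter_eq', mem_univ, if_true, prod_singleton]
  calc _ = termNum w y σ / termDen y σ *
        ((1 - y (σ (Fin.last n))) * (1 - y (σ (Fin.last n)))⁻¹) := by
        rw [termNum, termDen, mul_inv (∏ i : Fin n, _)]; ring
    _ = _ := by rw [mul_inv_cancel₀ hu, mul_one]

lemma termNum_snoc_one_eq_zero (w : K) (x : Fin n → K) {σ : Perm (Fin (n + 1))}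
    (hσ : σ (Fin.last n) ≠ Fin.last n) : termNum w (Fin.snoc x 1) σ = 0 := by
  obtain ⟨i, hi⟩ := Fin.exists_succAbove_eq hσ.symm
  rw [termNum, prod_eq_zero (mem_univ i) (by rw [hi, Fin.snoc_last, sub_self]), mul_zero,
    zero_mul, zero_mul, zero_mul]

lemma termDen_snoc_one_ne_zero {x : Fin n → K}
    (hx : ∀ s : Finset (Fin n), s.Nonempty → ∏ i ∈ s, x i ≠ 1) (hinj : Injective x)
    (σ : Perm (Fin (n + 1))) : termDen (Fin.snoc x 1) σ ≠ 0 := by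
  have hx1 : (1 : K) ∉ Set.range x := fun ⟨i, hi⟩ => hx {i} (singleton_nonempty i) (by simpa)
  refine mul_ne_zero (Fin.prod_prod_filter_lt_sub_ne_zero (Fin.snoc_injective_iff.mpr ⟨hinj, hx1⟩))
    (prod_ne_zero_iff.mpr fun i _ => ?_)
  rw [← prod_image (f := Fin.snoc x 1) σ.injective.injOn]
  refine Fin.one_sub_prod_snoc_one_ne_zero hx ?_
  by_cases hσi : σ i.castSucc = Fin.last n
  · refine ⟨σ (Fin.last n), by simp [Fin.le_last], fun h => ?_⟩
    exact (Fin.castSucc_lt_last i).ne (σ.injective (hσi.trans h.symm))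
  · exact ⟨σ i.castSucc, by simp, hσi⟩

lemma termNum_snoc_one_extendLast (w : K) (x : Fin n → K) (τ : Perm (Fin n)) :
    termNum w (Fin.snoc x 1) τ.extendLast =
      (Perm.sign τ : ℤ) * (∏ i, (1 - x i)) *
        ((∏ i, ∏ j ∈ univ.filter (fun j => i < j), (1 - x i * x j)) * ∏ i, (1 - x i)) *
        ((∏ i, ∏ j ∈ univ.filter (fun j => i < j), (x (τ i) * x (τ j) + 1 + w * x (τ i))) *
          ∏ k, (1 + x k + w * x k)) *
        ∏ i, x (τ i) ^ (i : ℕ) := by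
  rw [termNum, Perm.sign_extendLast, Perm.extendLast_last, Fin.prod_prod_filter_lt_succ,
    Fin.prod_prod_filter_lt_succ, Fin.prod_univ_castSucc (fun i => _ ^ (i : ℕ)),
    ← Equiv.prod_comp τ (fun k => 1 + x k + w * x k)]
  simp only [Perm.extendLast_castSucc, Perm.extendLast_last, Fin.succAbove_last, Fin.snoc_castSucc,
    Fin.snoc_last, mul_one, one_pow, Fin.val_castSucc]
  simp only [add_comm (x _) 1]

lemma termDen_snoc_one_extendLast (x : Fin n → K) (τ : Perm (Fin n)) :
    termDen (Fin.snoc x 1) τ.extendLast =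
      (∏ i, ∏ j ∈ univ.filter (fun j => i < j), (x j - x i)) * (∏ i, (1 - x i)) *
        ∏ i, (1 - ∏ j ∈ univ.filter (fun j => i ≤ j), x (τ j)) := by
  simp only [termDen, Fin.prod_prod_filter_lt_succ, Fin.prod_filter_castSucc_le,
    Perm.extendLast_castSucc, Perm.extendLast_last, Fin.snoc_castSucc, Fin.snoc_last, mul_one]

lemma sum_termNum_div_termDen_snoc_one (w : K) (x : Fin n → K) (hx : ∀ i, x i ≠ 1) :
    ∑ σ, termNum w (Fin.snoc x 1) σ / termDen (Fin.snoc x 1) σ =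
      (∏ k, (1 + x k + w * x k)) * Ftilde w n x := by
  rw [Perm.sum_eq_sum_extendLast _ fun σ hσ => by rw [termNum_snoc_one_eq_zero w x hσ, zero_div],
    Ftilde, Ffun, sum_div, mul_sum, mul_sum]
  refine sum_congr rfl fun τ _ => ?_
  have h1 : ∏ i, (1 - x i) ≠ 0 := prod_ne_zero_iff.mpr fun i _ => sub_ne_zero.mpr (hx i).symm
  rw [termNum_snoc_one_extendLast, termDen_snoc_one_extendLast, prod_mul_distrib,
    prod_inv_distrib]
  field_simp
  simp only [mul_comm w]
  ring

theorem eval_one_snoc_X (w : K) (x : Fin n → K) (hinj : Injective x)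
    (hx : ∀ s : Finset (Fin n), s.Nonempty → ∏ i ∈ s, x i ≠ 1) :
    RatFunc.eval (RingHom.id K) 1
        (Ftilde (RatFunc.C w) (n + 1) (Fin.snoc (fun i => RatFunc.C (x i)) RatFunc.X)) =
      (∏ k, (1 + x k + w * x k)) * Ftilde w n x := by
  have hx1 (i : Fin n) : x i ≠ 1 := by simpa using hx {i} (singleton_nonempty i)
  set Y : Fin (n + 1) → K[X] := Fin.snoc (fun i => Polynomial.C (x i)) Polynomial.X
  have hYrat : Fin.snoc (fun i => RatFunc.C (x i)) RatFunc.X = algebraMap K[X] (RatFunc K) ∘ Y := by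
    rw [Fin.comp_snoc, RatFunc.algebraMap_X]
    rfl
  have hYone : Polynomial.eval₂RingHom (RingHom.id K) 1 ∘ Y = Fin.snoc x 1 := by
    rw [Fin.comp_snoc]
    simp [comp_def]
  have hY (i : Fin (n + 1)) : (algebraMap K[X] (RatFunc K) ∘ Y) i ≠ 1 := by
    refine (map_ne_one_iff _ (RatFunc.algebraMap_injective K)).mpr ?_
    induction i using Fin.lastCases with
    | last => simpa [Y] using Polynomial.X_ne_C (1 : K)
    | cast i => simpa [Y] using Polynomial.C_injective.ne (hx1 i)
  rw [hYrat, ← RatFunc.algebraMap_C, eq_sum_termNum_div_termDen _ _ hY]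
  simp only [← map_termNum, ← map_termDen]
  rw [RatFunc.eval_sum_algebraMap_div _ _ _ fun σ _ => ?_]
  · simp only [← Polynomial.coe_eval₂RingHom, map_termNum, map_termDen, hYone]
    simp only [Polynomial.coe_eval₂RingHom, Polynomial.eval₂_C, RingHom.id_apply]
    exact sum_termNum_div_termDen_snoc_one w x hx1
  · rw [← Polynomial.coe_eval₂RingHom, map_termDen, hYone]
    exact termDen_snoc_one_ne_zero hx hinj σ

end Ftilde

lemma xx_injective_s15 : Injective xx :=
  (IsFractionRing.injective (MvPolynomial ℕ ℚ) KK).comp MvPolynomial.X_injective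

lemma prod_xx_ne_one {ι : Type*} (s : Finset ι) (g : ι → ℕ) (hs : s.Nonempty) :
    ∏ k ∈ s, xx (g k) ≠ 1 := by
  simp only [xx, ← map_prod]
  rw [map_ne_one_iff _ (IsFractionRing.injective (MvPolynomial ℕ ℚ) KK)]
  intro h
  simpa [hs.ne_empty] using congrArg (MvPolynomial.eval 0) h

/-- `x_n` is the variable `T = RatFunc.X` of `ℚ(w, x_1, x_2, …)(T)`; `RatFunc.eval` reduces the
fraction before substituting `T = 1`, so it returns the value of a function regular there. -/
theorem stmt15 (p : ℕ) :
    RatFunc.eval (RingHom.id KK) 1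
      (Ftilde (RatFunc.C ww) (p + 2)
        (Fin.snoc (fun i : Fin (p + 1) => RatFunc.C (xx ((i : ℕ) + 1))) RatFunc.X))
    = (∏ k : Fin (p + 1), (1 + xx ((k : ℕ) + 1) + ww * xx ((k : ℕ) + 1))) *
        Ftilde ww (p + 1) (fun i => xx ((i : ℕ) + 1)) :=
  Ftilde.eval_one_snoc_X ww _ (xx_injective_s15.comp fun _ _ h => Fin.ext (Nat.succ_injective h))
    fun s hs => prod_xx_ne_one s _ hs

end
end
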